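/- arXiv:2101.09776 — 6 statements merged into one kernel-verified Lean document; each statement's English description precedes it below -/
import Mathlib

section
/- (Fell's absorption principle for semigroups) Let P be a unital left cancellative semigroup, λ : P → B(ℓ²(P)) its left regular representation, and V : P → B(H) a representation of P by isometries on a Hilbert space H (i.e., each V_p is an isometry and V_p V_q = V_{pq}). Then the map e_p ⊗ ξ ↦ e_p ⊗ V_p(ξ) extends to an isometry W on ℓ²(P) ⊗ H satisfying W(λ_p ⊗ id_H) = (λ_p ⊗ V_p)W for every p ∈ P. -/
open scoped ENNReal

/-- **Fell's absorption principle for semigroups.**  Let `P` be a unital left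
cancellative semigroup, `V : P → B(H)` a representation of `P` by isometries on a
Hilbert space `H`, and realize `ℓ²(P) ⊗ H` as `lp (fun _ : P => H) 2` with
elementary tensors `e p ⊗ ξ = lp.single 2 p ξ`.  Let `L p` be `λ_p ⊗ id` and
`M p` be `λ_p ⊗ V p` (determined by their actions on elementary tensors).  Then
the map `e p ⊗ ξ ↦ e p ⊗ V p ξ` extends to an isometry `W` satisfying
`W (λ_p ⊗ id) = (λ_p ⊗ V p) W` for every `p`. -/
theorem fell_absorption_semigroup
    {P : Type*} [LeftCancelMonoid P] [DecidableEq P]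
    {H : Type*} [NormedAddCommGroup H] [InnerProductSpace ℂ H] [CompleteSpace H]
    (V : P → (H →L[ℂ] H))
    (hViso : ∀ p : P, Isometry (V p))
    (hVmul : ∀ p q : P, (V p).comp (V q) = V (p * q))
    (L M : P → (lp (fun _ : P => H) 2 →L[ℂ] lp (fun _ : P => H) 2))
    (hL : ∀ p q : P, ∀ ξ : H, L p (lp.single 2 q ξ) = lp.single 2 (p * q) ξ)
    (hM : ∀ p q : P, ∀ ξ : H, M p (lp.single 2 q ξ) = lp.single 2 (p * q) (V p ξ)) :
    ∃ W : lp (fun _ : P => H) 2 →L[ℂ] lp (fun _ : P => H) 2,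
      Isometry W ∧
      (∀ (p : P) (ξ : H), W (lp.single 2 p ξ) = lp.single 2 p (V p ξ)) ∧
      (∀ p : P, W.comp (L p) = (M p).comp W) := by
  have hVnorm : ∀ (p : P) (x : H), ‖V p x‖ = ‖x‖ := fun p x => by
    simpa using (hViso p).norm_map_of_map_zero (map_zero _) x
  have htwo : (0 : ℝ) < (2 : ℝ≥0∞).toReal := by norm_num
  -- membership
  have hmem : ∀ f : lp (fun _ : P => H) 2, Memℓp (fun q => V q (f q)) 2 := by
    intro f
    apply memℓp_gen
    have := (memℓp_gen_iff htwo).mp (lp.memℓp f)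
    refine this.congr fun q => ?_
    rw [hVnorm]
  -- the linear isometry
  let W₀ : lp (fun _ : P => H) 2 →ₗᵢ[ℂ] lp (fun _ : P => H) 2 :=
    { toFun := fun f => ⟨fun q => V q (f q), hmem f⟩
      map_add' := fun f g => by
        ext q
        simp [lp.coeFn_add, Pi.add_apply]
        rfl
      map_smul' := fun c f => by
        ext q
        simp [lp.coeFn_smul, Pi.smul_apply]
      norm_map' := fun f => by
        rw [lp.norm_eq_tsum_rpow htwo, lp.norm_eq_tsum_rpow htwo]
        congr 1
        refine tsum_congr fun q => ?_
        show ‖V q (f q)‖ ^ (2 : ℝ≥0∞).toReal = ‖f q‖ ^ (2 : ℝ≥0∞).toReal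
        rw [hVnorm] }
  have hW₀single : ∀ (p : P) (ξ : H), W₀ (lp.single 2 p ξ) = lp.single 2 p (V p ξ) := by
    intro p ξ
    ext q
    have hcoe : ∀ g : lp (fun _ : P => H) 2, (W₀ g : ∀ _ : P, H) q = V q (g q) :=
      fun _ => rfl
    rw [hcoe]
    by_cases h : q = p
    · subst h
      rw [lp.single_apply_self, lp.single_apply_self]
    · rw [lp.single_apply_ne _ _ _ h, lp.single_apply_ne _ _ _ h, map_zero]
  refine ⟨W₀.toContinuousLinearMap, W₀.isometry, hW₀single, ?_⟩
  intro p
  -- agree on singles, conclude by density via hasSum_single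
  refine ContinuousLinearMap.ext fun f => ?_
  have hsum := lp.hasSum_single (by norm_num : (2 : ℝ≥0∞) ≠ ⊤) f
  have h1 : HasSum (fun q : P => (W₀.toContinuousLinearMap.comp (L p))
      (lp.single 2 q (f q))) ((W₀.toContinuousLinearMap.comp (L p)) f) :=
    hsum.mapL _
  have h2 : HasSum (fun q : P => ((M p).comp W₀.toContinuousLinearMap)
      (lp.single 2 q (f q))) (((M p).comp W₀.toContinuousLinearMap) f) :=
    hsum.mapL _
  have heq : (fun q : P => (W₀.toContinuousLinearMap.comp (L p)) (lp.single 2 q (f q)))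
      = fun q : P => ((M p).comp W₀.toContinuousLinearMap) (lp.single 2 q (f q)) := by
    funext q
    simp only [ContinuousLinearMap.comp_apply, LinearIsometry.coe_toContinuousLinearMap]
    rw [hL p q (f q), hW₀single q (f q), hM p q (V q (f q)), hW₀single (p * q) (f q)]
    congr 1
    rw [← hVmul p q]
    rfl
  rw [heq] at h1
  exact h1.unique h2
end

section
/- Let A be an algebra of bounded operators on a Hilbert space H and let S ⊆ H be a closed subspace. Then the compression map a ↦ P_S a|_S is multiplicative on A if and only if S = M ⊖ N for some closed subspaces N ⊆ M ⊆ H that are both invariant under A. -/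
/-- Let `A ⊆ B(H)` be an algebra of bounded operators on a Hilbert space `H` and
let `S ⊆ H` be a closed subspace.  Then the compression map `a ↦ P_S a |_S` is
multiplicative on `A` if and only if `S = M ⊖ N` (i.e. `S = M ⊓ Nᗮ`) for some
closed subspaces `N ⊆ M` of `H` that are both invariant under `A`. -/
theorem semiinvariant_iff_diff_of_invariant
    {H : Type*} [NormedAddCommGroup H] [InnerProductSpace ℂ H] [CompleteSpace H]
    (A : Subalgebra ℂ (H →L[ℂ] H))
    (S : Submodule ℂ H) [CompleteSpace S] :
    (∀ a ∈ A, ∀ b ∈ A,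
        S.orthogonalProjectionOnto.comp ((a * b).comp S.subtypeL) =
          (S.orthogonalProjectionOnto.comp (a.comp S.subtypeL)).comp
            (S.orthogonalProjectionOnto.comp (b.comp S.subtypeL))) ↔
      ∃ M N : Submodule ℂ H,
        IsClosed (M : Set H) ∧ IsClosed (N : Set H) ∧ N ≤ M ∧
        (∀ a ∈ A, ∀ x ∈ M, a x ∈ M) ∧
        (∀ a ∈ A, ∀ x ∈ N, a x ∈ N) ∧
        S = M ⊓ Nᗮ := by
  constructor
  · intro h
    -- M₀ : submodule generated by S and A·S
    set T : Set H := {y | ∃ a ∈ A, ∃ x ∈ S, y = a x} with hT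
    set M₀ : Submodule ℂ H := S ⊔ Submodule.span ℂ T with hM₀
    set M : Submodule ℂ H := M₀.topologicalClosure with hM
    have hSM₀ : S ≤ M₀ := le_sup_left
    have hSM : S ≤ M := hSM₀.trans (Submodule.le_topologicalClosure M₀)
    -- invariance of M₀
    have hM₀inv : ∀ a ∈ A, ∀ x ∈ M₀, a x ∈ M₀ := by
      intro a ha x hx
      have : M₀.map (a : H →ₗ[ℂ] H) ≤ M₀ := by
        rw [hM₀, Submodule.map_sup]
        apply sup_le
        · refine le_trans ?_ le_sup_right
          rintro y ⟨s, hs, rfl⟩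
          exact Submodule.subset_span ⟨a, ha, s, hs, rfl⟩
        · refine le_trans ?_ le_sup_right
          rw [Submodule.map_span]
          apply Submodule.span_mono
          rintro y ⟨z, ⟨b, hb, s, hs, rfl⟩, rfl⟩
          exact ⟨a * b, mul_mem ha hb, s, hs, rfl⟩
      exact this ⟨x, hx, rfl⟩
    -- invariance of M
    have hMinv : ∀ a ∈ A, ∀ x ∈ M, a x ∈ M := by
      intro a ha x hx
      have h1 : a x ∈ closure ((a : H → H) '' (M₀ : Set H)) := by
        have : (a : H → H) '' closure (M₀ : Set H) ⊆ closure ((a : H → H) '' (M₀ : Set H)) :=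
          image_closure_subset_closure_image a.continuous
        exact this ⟨x, hx, rfl⟩
      refine closure_mono ?_ h1
      rintro y ⟨z, hz, rfl⟩
      exact hM₀inv a ha z hz
    -- key lemma: compression is "reproduced" on M
    have key : ∀ a ∈ A, ∀ m ∈ M, S.orthogonalProjectionOnto (a m)
        = S.orthogonalProjectionOnto (a (S.orthogonalProjectionOnto m : H)) := by
      intro a ha
      set f : H →L[ℂ] S := S.orthogonalProjectionOnto.comp a with hf
      set g : H →L[ℂ] S :=
        (S.orthogonalProjectionOnto.comp (a.comp S.subtypeL)).comp S.orthogonalProjectionOnto with hg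
      suffices hle : M ≤ LinearMap.ker ((f - g : H →L[ℂ] S) : H →ₗ[ℂ] S) by
        intro m hm
        have := hle hm
        rw [LinearMap.mem_ker] at this
        have h2 : f m - g m = 0 := by
          simpa using this
        have := sub_eq_zero.mp h2
        simpa [hf, hg] using this
      apply Submodule.topologicalClosure_minimal
      · apply sup_le
        · intro s hs
          rw [LinearMap.mem_ker]
          have : S.orthogonalProjectionOnto s = ⟨s, hs⟩ :=
            Submodule.orthogonalProjectionOnto_mem_subspace_eq_self (⟨s, hs⟩ : S)
          simp [hf, hg, this]
        · rw [Submodule.span_le]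
          rintro y ⟨b, hb, s, hs, rfl⟩
          rw [SetLike.mem_coe, LinearMap.mem_ker]
          have := congrFun (congrArg DFunLike.coe (h a ha b hb)) (⟨s, hs⟩ : S)
          simp only [ContinuousLinearMap.coe_comp', Function.comp_apply,
            Submodule.coe_subtypeL', Submodule.coe_subtype] at this
          have hmul : (a * b) s = a (b s) := rfl
          rw [hmul] at this
          simp [hf, hg, this]
      · exact ContinuousLinearMap.isClosed_ker _
    set N : Submodule ℂ H := M ⊓ Sᗮ with hN
    have hNS : N ≤ Sᗮ := inf_le_right
    have hSN : S ≤ Nᗮ := le_trans (Submodule.le_orthogonal_orthogonal S) (Submodule.orthogonal_le hNS)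
    refine ⟨M, N, Submodule.isClosed_topologicalClosure M₀,
      IsClosed.inter (Submodule.isClosed_topologicalClosure M₀) (Submodule.isClosed_orthogonal S),
      inf_le_left, hMinv, ?_, ?_⟩
    · -- N invariant
      rintro a ha x ⟨hxM, hxS⟩
      refine ⟨hMinv a ha x hxM, ?_⟩
      have h0 : S.orthogonalProjectionOnto x = 0 :=
        Submodule.orthogonalProjectionOnto_apply_of_mem_orthogonal hxS
      have h1 : S.orthogonalProjectionOnto (a x) = 0 := by
        rw [key a ha x hxM, h0]
        simp
      have := Submodule.sub_starProjection_mem_orthogonal (K := S) (a x)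
      rw [Submodule.starProjection_apply] at this
      rwa [h1, ZeroMemClass.coe_zero, sub_zero] at this
    · -- S = M ⊓ Nᗮ
      apply le_antisymm
      · exact le_inf hSM hSN
      · rintro x ⟨hxM, hxN⟩
        have hps : (S.orthogonalProjectionOnto x : H) ∈ S := (S.orthogonalProjectionOnto x).2
        have hd : x - (S.orthogonalProjectionOnto x : H) ∈ N :=
          ⟨M.sub_mem hxM (hSM hps), Submodule.sub_starProjection_mem_orthogonal x⟩
        have hd' : x - (S.orthogonalProjectionOnto x : H) ∈ Nᗮ :=
          Nᗮ.sub_mem hxN (hSN hps)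
        have : x - (S.orthogonalProjectionOnto x : H) = 0 := by
          have := (Submodule.orthogonal_disjoint N).le_bot ⟨hd, hd'⟩
          simpa using this
        have hx : x = (S.orthogonalProjectionOnto x : H) := by
          linear_combination (norm := module) this
        rw [hx]; exact hps
  · rintro ⟨M, N, hMc, hNc, hNM, hMinv, hNinv, hS⟩ a ha b hb
    haveI : CompleteSpace N := hNc.completeSpace_coe
    have hSM : S ≤ M := by rw [hS]; exact inf_le_left
    have hSNo : S ≤ Nᗮ := by rw [hS]; exact inf_le_right
    have hNSo : N ≤ Sᗮ := le_trans (Submodule.le_orthogonal_orthogonal N) (Submodule.orthogonal_le hSNo)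
    -- for any m ∈ M, P_S m recovers the S-component, and P_S (a m) = P_S (a (P_S m))
    have key : ∀ c ∈ A, ∀ m ∈ M, S.orthogonalProjectionOnto (c m)
        = S.orthogonalProjectionOnto (c (S.orthogonalProjectionOnto m : H)) := by
      intro c hc m hm
      set n : H := (N.orthogonalProjectionOnto m : H) with hn
      have hnN : n ∈ N := (N.orthogonalProjectionOnto m).2
      have htS : m - n ∈ S := by
        rw [hS]
        exact ⟨M.sub_mem hm (hNM hnN), Submodule.sub_starProjection_mem_orthogonal m⟩
      have hPm : (S.orthogonalProjectionOnto m : H) = m - n := by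
        have : S.orthogonalProjectionOnto m = S.orthogonalProjectionOnto n + S.orthogonalProjectionOnto (m - n) := by
          rw [← map_add]; congr 1; abel
        rw [this, Submodule.orthogonalProjectionOnto_apply_of_mem_orthogonal (hNSo hnN),
          Submodule.orthogonalProjectionOnto_mem_subspace_eq_self (⟨m - n, htS⟩ : S)]
        simp
      have hsplit : c m = c n + c (m - n) := by rw [← map_add]; congr 1; abel
      have hcN : c n ∈ Sᗮ := hNSo (hNinv c hc n hnN)
      rw [hsplit, map_add, Submodule.orthogonalProjectionOnto_apply_of_mem_orthogonal hcN,
        zero_add, hPm]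
    ext x
    have hbx : (b : H →L[ℂ] H) (x : H) ∈ M := hMinv b hb x (hSM x.2)
    have := key a ha ((b : H →L[ℂ] H) (x : H)) hbx
    have hmul : (a * b) (x : H) = a (b (x : H)) := rfl
    simp only [ContinuousLinearMap.coe_comp', Function.comp_apply, Submodule.coe_subtypeL',
      Submodule.coe_subtype, hmul]
    exact congrArg Subtype.val this
end

section
/- Let G and H be groups, P ⊆ G and Q ⊆ H unital subsemigroups, and φ : G → H a group homomorphism with φ(P) ⊆ Q and such that φ⁻¹(q) ∩ P is finite for every q ∈ Q (a (P,Q)-map). If P has the finite divisor property and φ(P) = Q, then Q has the finite divisor property. -/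
/-- Let `G`, `H` be groups, `P ⊆ G`, `Q ⊆ H` unital subsemigroups, and
`φ : G → H` a homomorphism with `φ(P) ⊆ Q` such that `φ⁻¹(q) ∩ P` is finite for
every `q ∈ Q` (a `(P,Q)`-map).  If `P` has the finite divisor property and
`φ(P) = Q`, then `Q` has the finite divisor property. -/
theorem fdp_of_controlled_map
    {G H : Type*} [Group G] [Group H]
    (P : Submonoid G) (Q : Submonoid H) (φ : G →* H)
    (hPQ : ∀ p ∈ P, φ p ∈ Q)
    (hfin : ∀ q ∈ Q, {g : G | g ∈ P ∧ φ g = q}.Finite)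
    (hFDP : ∀ p ∈ P, {r : G | r ∈ P ∧ ∃ q ∈ P, p = q * r}.Finite ∧
      {q : G | q ∈ P ∧ ∃ r ∈ P, p = q * r}.Finite)
    (hsurj : ∀ q ∈ Q, ∃ p ∈ P, φ p = q) :
    ∀ x ∈ Q, {r : H | r ∈ Q ∧ ∃ q ∈ Q, x = q * r}.Finite ∧
      {q : H | q ∈ Q ∧ ∃ r ∈ Q, x = q * r}.Finite := by
  intro x hx
  have hF : {g : G | g ∈ P ∧ φ g = x}.Finite := hfin x hx
  constructor
  · have hS : (⋃ p ∈ {g : G | g ∈ P ∧ φ g = x},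
        {r : G | r ∈ P ∧ ∃ q ∈ P, p = q * r}).Finite :=
      hF.biUnion (fun p hp => (hFDP p hp.1).1)
    refine (hS.image φ).subset ?_
    rintro r ⟨hrQ, q, hqQ, hx_eq⟩
    obtain ⟨a, haP, ha⟩ := hsurj r hrQ
    obtain ⟨b, hbP, hb⟩ := hsurj q hqQ
    refine ⟨a, ?_, ha⟩
    simp only [Set.mem_iUnion]
    exact ⟨b * a, ⟨P.mul_mem hbP haP, by simp [map_mul, ha, hb, hx_eq]⟩, haP, b, hbP, rfl⟩
  · have hS : (⋃ p ∈ {g : G | g ∈ P ∧ φ g = x},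
        {q : G | q ∈ P ∧ ∃ r ∈ P, p = q * r}).Finite :=
      hF.biUnion (fun p hp => (hFDP p hp.1).2)
    refine (hS.image φ).subset ?_
    rintro q ⟨hqQ, r, hrQ, hx_eq⟩
    obtain ⟨a, haP, ha⟩ := hsurj r hrQ
    obtain ⟨b, hbP, hb⟩ := hsurj q hqQ
    refine ⟨b, ?_, hb⟩
    simp only [Set.mem_iUnion]
    exact ⟨b * a, ⟨P.mul_mem hbP haP, by simp [map_mul, ha, hb, hx_eq]⟩, hbP, a, haP, rfl⟩
end

section
/- Let P and Q be discrete semigroups with Q cancellative, let φ : P → Q be a semigroup homomorphism, and let δ : A → B be a bounded homomorphism between the operator algebras A_r(P) and A_r(P) ⊗_min A_r(Q) satisfying δ(λ^P_p) = λ^P_p ⊗ λ^Q_{φ(p)} for all p ∈ P. Then for each q ∈ Q, the spectral subspace {a ∈ A_r(P) : δ(a) = a ⊗ λ^Q_q} equals the norm closure of the linear span of {λ^P_p : p ∈ φ⁻¹(q)}. -/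
set_option synthInstance.maxHeartbeats 4000000
set_option maxHeartbeats 10000000
set_option linter.unusedSectionVars false

open scoped ENNReal

section CSSHelpers

variable {α β : Type*} [DecidableEq α] [DecidableEq β]

theorem css_fact2 : Fact ((1:ℝ≥0∞) ≤ 2) := ⟨one_le_two⟩

theorem css_single_eq_smul (i : α) (c : ℂ) :
    lp.single (E := fun _ : α => ℂ) 2 i c = c • lp.single 2 i (1:ℂ) := by
  rw [← lp.single_smul]; simp [smul_eq_mul]

theorem css_clm_ext_lp {W : Type*} [NormedAddCommGroup W] [NormedSpace ℂ W]
    {T S : lp (fun _ : α => ℂ) 2 →L[ℂ] W}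
    (h : ∀ i, T (lp.single 2 i (1:ℂ)) = S (lp.single 2 i (1:ℂ))) : T = S := by
  have : Fact ((1:ℝ≥0∞) ≤ 2) := css_fact2
  ext f
  have hf : HasSum (fun i : α => lp.single 2 i (f i)) f :=
    lp.hasSum_single (by norm_num) f
  refine (hf.mapL T).unique ?_
  have heq : (fun i : α => T (lp.single 2 i (f i))) = fun i => S (lp.single 2 i (f i)) := by
    funext i
    rw [css_single_eq_smul, map_smul, map_smul, h i]
  rw [heq]
  exact hf.mapL S

theorem css_memℓp_slice (t : β) (f : lp (fun _ : α × β => ℂ) 2) :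
    Memℓp (fun p : α => f (p, t)) 2 := by
  apply memℓp_gen
  have hs : Summable fun i : α × β => ‖f i‖ ^ (2:ℝ≥0∞).toReal :=
    (lp.memℓp f).summable (by norm_num)
  have := hs.comp_injective (i := fun p : α => (p, t))
    (fun p p' h => (Prod.ext_iff.1 h).1)
  exact this

/-- coordinate-slice map `ℓ²(α × β) → ℓ²(α)`, `(css_slice t f) p = f (p, t)`. -/
noncomputable def css_sliceLM (t : β) :
    lp (fun _ : α × β => ℂ) 2 →ₗ[ℂ] lp (fun _ : α => ℂ) 2 where
  toFun f := ⟨fun p => f (p, t), css_memℓp_slice t f⟩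
  map_add' f g := by
    ext p
    simp [lp.coeFn_add]; rfl
  map_smul' c f := by
    ext p
    simp [lp.coeFn_smul]

theorem css_norm_sliceLM_le (t : β) (f : lp (fun _ : α × β => ℂ) 2) :
    ‖css_sliceLM (α := α) t f‖ ≤ ‖f‖ := by
  have h2 : (0:ℝ) < (2:ℝ≥0∞).toReal := by norm_num
  rw [← Real.rpow_le_rpow_iff (lp.norm_nonneg' _) (lp.norm_nonneg' _) h2]
  rw [lp.norm_rpow_eq_tsum h2, lp.norm_rpow_eq_tsum h2]
  refine Summable.tsum_le_tsum_of_inj (fun p : α => (p, t))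
    (fun p p' h => (Prod.ext_iff.1 h).1)
    (fun c _ => Real.rpow_nonneg (norm_nonneg _) _)
    (fun p => le_rfl)
    ?_ ((lp.memℓp f).summable h2)
  exact ((lp.memℓp f).summable h2).comp_injective (fun p p' h => (Prod.ext_iff.1 h).1)

noncomputable def css_slice (t : β) :
    lp (fun _ : α × β => ℂ) 2 →L[ℂ] lp (fun _ : α => ℂ) 2 :=
  (css_sliceLM t).mkContinuous 1 (fun f => by simpa using css_norm_sliceLM_le t f)

theorem css_slice_apply (t : β) (f : lp (fun _ : α × β => ℂ) 2) (p : α) :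
    css_slice t f p = f (p, t) := rfl

theorem css_norm_slice_apply_le (t : β) (f : lp (fun _ : α × β => ℂ) 2) :
    ‖css_slice (α := α) t f‖ ≤ ‖f‖ := css_norm_sliceLM_le t f

theorem css_slice_single_self (t : β) (r : α) (c : ℂ) :
    css_slice t (lp.single 2 (r, t) c) = lp.single 2 r c := by
  ext p
  rw [css_slice_apply]
  by_cases h : p = r
  · subst h; rw [lp.single_apply_self, lp.single_apply_self]
  · rw [lp.single_apply_ne _ _ _ (by simp [h]), lp.single_apply_ne _ _ _ h]

theorem css_slice_single_ne {t s : β} (h : s ≠ t) (r : α) (c : ℂ) :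
    css_slice t (lp.single 2 (r, s) c) = 0 := by
  ext p
  rw [css_slice_apply]
  rw [lp.single_apply_ne _ _ _ (by simp [h.symm])]
  rfl

end CSSHelpers

noncomputable instance css_nusa_normedSpace {α : Type*}
    (S : NonUnitalSubalgebra ℂ (lp (fun _ : α => ℂ) 2 →L[ℂ] lp (fun _ : α => ℂ) 2)) :
    NormedSpace ℂ S where
  norm_smul_le c x := norm_smul_le c (x : lp (fun _ : α => ℂ) 2 →L[ℂ] lp (fun _ : α => ℂ) 2)

noncomputable instance css_nusa_clm_sacg {α β : Type*}
    (S : NonUnitalSubalgebra ℂ (lp (fun _ : α => ℂ) 2 →L[ℂ] lp (fun _ : α => ℂ) 2)) :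
    SeminormedAddCommGroup (S →L[ℂ] (lp (fun _ : β => ℂ) 2 →L[ℂ] lp (fun _ : β => ℂ) 2)) :=
  @ContinuousLinearMap.toSeminormedAddCommGroup ℂ ℂ S _ _ _ _ _ _ _ (RingHom.id ℂ) _

theorem css_le_opNorm {α β : Type*}
    (S : NonUnitalSubalgebra ℂ (lp (fun _ : α => ℂ) 2 →L[ℂ] lp (fun _ : α => ℂ) 2))
    (f : S →L[ℂ] (lp (fun _ : β => ℂ) 2 →L[ℂ] lp (fun _ : β => ℂ) 2)) (x : S) :
    ‖f x‖ ≤ ‖f‖ * ‖x‖ :=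
  ContinuousLinearMap.le_opNorm (𝕜 := ℂ) (𝕜₂ := ℂ) (σ₁₂ := RingHom.id ℂ) (E := S) f x

/-- Let `P`, `Q` be discrete semigroups with `Q` cancellative, `φ : P → Q` a
semigroup homomorphism, and realize `ℓ²(P) ⊗ ℓ²(Q)` as `ℓ²(P × Q)`, with
`a ⊗ λ^Q_q` given by the map `tens a q` (determined by
`(a ⊗ λ^Q_q)(x ⊗ e_s) = a x ⊗ e_{q s}`).  Let `A_r(P)` be the norm closure of
the algebra generated by the left regular representation `λ^P` and let
`δ : A_r(P) → A_r(P) ⊗_min A_r(Q)` be a bounded homomorphism with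
`δ (λ^P_p) = λ^P_p ⊗ λ^Q_{φ p}`.  Then for each `q ∈ Q` the spectral subspace
`{a : δ a = a ⊗ λ^Q_q}` is exactly the closed linear span of
`{λ^P_p : φ p = q}`. -/
theorem coaction_spectral_subspace_eq_closed_span
    {P Q : Type*} [Semigroup P] [Semigroup Q] [IsCancelMul Q]
    [DecidableEq P] [DecidableEq Q]
    (φ : P →ₙ* Q)
    (lamP : P → (lp (fun _ : P => ℂ) 2 →L[ℂ] lp (fun _ : P => ℂ) 2))
    (hlamP : ∀ p r : P,
      lamP p (lp.single 2 r (1 : ℂ)) = lp.single 2 (p * r) (1 : ℂ))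
    (incl : Q → (lp (fun _ : P => ℂ) 2 →L[ℂ] lp (fun _ : P × Q => ℂ) 2))
    (hincl : ∀ (s : Q) (p : P),
      incl s (lp.single 2 p (1 : ℂ)) = lp.single 2 (p, s) (1 : ℂ))
    (hincl_iso : ∀ s : Q, Isometry (incl s))
    (tens : (lp (fun _ : P => ℂ) 2 →L[ℂ] lp (fun _ : P => ℂ) 2) → Q →
      (lp (fun _ : P × Q => ℂ) 2 →L[ℂ] lp (fun _ : P × Q => ℂ) 2))
    (htens : ∀ (a : lp (fun _ : P => ℂ) 2 →L[ℂ] lp (fun _ : P => ℂ) 2) (q s : Q)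
      (x : lp (fun _ : P => ℂ) 2), tens a q (incl s x) = incl (q * s) (a x))
    (δ : ↥((NonUnitalAlgebra.adjoin ℂ (Set.range lamP)).topologicalClosure) →L[ℂ]
      (lp (fun _ : P × Q => ℂ) 2 →L[ℂ] lp (fun _ : P × Q => ℂ) 2))
    (hδmul : ∀ a b, δ (a * b) = δ a * δ b)
    (hδ : ∀ p : P, δ ⟨lamP p,
        (NonUnitalAlgebra.adjoin ℂ (Set.range lamP)).le_topologicalClosure
          (NonUnitalAlgebra.subset_adjoin ℂ ⟨p, rfl⟩)⟩ =
      tens (lamP p) (φ p)) :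
    ∀ (q : Q) (a : ↥((NonUnitalAlgebra.adjoin ℂ (Set.range lamP)).topologicalClosure)),
      δ a = tens (a : lp (fun _ : P => ℂ) 2 →L[ℂ] lp (fun _ : P => ℂ) 2) q ↔
        (a : lp (fun _ : P => ℂ) 2 →L[ℂ] lp (fun _ : P => ℂ) 2) ∈
          (Submodule.span ℂ
            {T : lp (fun _ : P => ℂ) 2 →L[ℂ] lp (fun _ : P => ℂ) 2 |
              ∃ p : P, φ p = q ∧ T = lamP p}).topologicalClosure := by
  intro q a
  -- lamP is multiplicative
  have hmul : ∀ p r : P, lamP p * lamP r = lamP (p * r) := by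
    intro p r
    apply css_clm_ext_lp
    intro s
    rw [ContinuousLinearMap.mul_apply, hlamP, hlamP, hlamP, mul_assoc]
  -- adjoin = span
  let SG : Subsemigroup ((lp (fun _ : P => ℂ) 2) →L[ℂ] (lp (fun _ : P => ℂ) 2)) :=
    { carrier := Set.range lamP
      mul_mem' := by rintro _ _ ⟨p, rfl⟩ ⟨r, rfl⟩; exact ⟨p * r, (hmul p r).symm⟩ }
  have hSG : Subsemigroup.closure (Set.range lamP) = SG := Subsemigroup.closure_eq SG
  have hadj : (NonUnitalAlgebra.adjoin ℂ (Set.range lamP)).toSubmodule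
      = Submodule.span ℂ (Set.range lamP) := by
    rw [NonUnitalAlgebra.adjoin_eq_span, hSG]
    rfl
  -- members of M are in A
  have hMA : ∀ T ∈ (Submodule.span ℂ {T : (lp (fun _ : P => ℂ) 2) →L[ℂ] (lp (fun _ : P => ℂ) 2) | ∃ p : P, φ p = q ∧ T = lamP p}), T ∈ ((NonUnitalAlgebra.adjoin ℂ (Set.range lamP)).topologicalClosure) := by
    intro T hT
    apply (NonUnitalAlgebra.adjoin ℂ (Set.range lamP)).le_topologicalClosure
    rw [← NonUnitalSubalgebra.mem_toSubmodule, hadj]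
    refine Submodule.span_le.2 ?_ hT
    rintro _ ⟨p, -, rfl⟩
    exact Submodule.subset_span ⟨p, rfl⟩
  have hsubA : ∀ T ∈ Submodule.span ℂ (Set.range lamP), T ∈ ((NonUnitalAlgebra.adjoin ℂ (Set.range lamP)).topologicalClosure) := by
    intro T hT
    apply (NonUnitalAlgebra.adjoin ℂ (Set.range lamP)).le_topologicalClosure
    rw [← NonUnitalSubalgebra.mem_toSubmodule, hadj]
    exact hT
  -- slice ∘ incl
  have hslice_incl : ∀ (s t : Q) (x : (lp (fun _ : P => ℂ) 2)),
      css_slice t (incl s x) = if s = t then x else 0 := by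
    intro s t
    have : (css_slice t).comp (incl s)
        = if s = t then ContinuousLinearMap.id ℂ (lp (fun _ : P => ℂ) 2) else 0 := by
      apply css_clm_ext_lp
      intro r
      rw [ContinuousLinearMap.comp_apply, hincl]
      by_cases h : s = t
      · subst h
        rw [if_pos rfl, css_slice_single_self]
        rfl
      · rw [if_neg h, css_slice_single_ne h]
        rfl
    intro x
    have h' := congrArg (fun T => T x) this
    by_cases h : s = t
    · simpa [h] using h'
    · simpa [h] using h'
  constructor
  · -- spectral subspace ⊆ closed span
    intro hδa
    show (a : (lp (fun _ : P => ℂ) 2) →L[ℂ] (lp (fun _ : P => ℂ) 2)) ∈ closure ((Submodule.span ℂ {T : (lp (fun _ : P => ℂ) 2) →L[ℂ] (lp (fun _ : P => ℂ) 2) | ∃ p : P, φ p = q ∧ T = lamP p}) : Set ((lp (fun _ : P => ℂ) 2) →L[ℂ] (lp (fun _ : P => ℂ) 2)))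
    rw [Metric.mem_closure_iff]
    intro ε hε
    have hC : (0:ℝ) < ‖δ‖ + 1 := by positivity
    -- approximate a by an element of the span of the lamP
    have haclos : (a : (lp (fun _ : P => ℂ) 2) →L[ℂ] (lp (fun _ : P => ℂ) 2)) ∈
        closure ((NonUnitalAlgebra.adjoin ℂ (Set.range lamP) : Set ((lp (fun _ : P => ℂ) 2) →L[ℂ] (lp (fun _ : P => ℂ) 2)))) := a.2
    rw [Metric.mem_closure_iff] at haclos
    obtain ⟨a', ha'mem, ha'close⟩ := haclos (ε / (‖δ‖ + 1)) (by positivity)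
    have ha'span : a' ∈ Submodule.span ℂ (Set.range lamP) := by
      rw [← hadj]; exact ha'mem
    -- key estimate: simulate δ a' by an element of M
    have hkey : ∀ a'' (ha'' : a'' ∈ Submodule.span ℂ (Set.range lamP)),
        ∃ b' ∈ (Submodule.span ℂ {T : (lp (fun _ : P => ℂ) 2) →L[ℂ] (lp (fun _ : P => ℂ) 2) | ∃ p : P, φ p = q ∧ T = lamP p}), ∀ h : (lp (fun _ : P => ℂ) 2),
          css_slice (q*q) (δ ⟨a'', hsubA a'' ha''⟩ (incl q h)) = b' h := by
      intro a'' ha''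
      induction ha'' using Submodule.span_induction with
      | mem T hT =>
        obtain ⟨p, rfl⟩ := hT
        refine ⟨if φ p = q then lamP p else 0, ?_, ?_⟩
        · by_cases h : φ p = q
          · rw [if_pos h]; exact Submodule.subset_span ⟨p, h, rfl⟩
          · rw [if_neg h]; exact zero_mem _
        · intro h
          have : (⟨lamP p, hsubA (lamP p) (Submodule.subset_span ⟨p, rfl⟩)⟩ : ((NonUnitalAlgebra.adjoin ℂ (Set.range lamP)).topologicalClosure))
              = ⟨lamP p, (NonUnitalAlgebra.adjoin ℂ (Set.range lamP)).le_topologicalClosure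
                  (NonUnitalAlgebra.subset_adjoin ℂ ⟨p, rfl⟩)⟩ := rfl
          rw [this, hδ, htens, hslice_incl]
          by_cases hpq : φ p = q
          · rw [if_pos (by rw [hpq]), if_pos hpq]
          · rw [if_neg (fun hc => hpq (mul_right_cancel hc)), if_neg hpq]
            simp
      | zero =>
        refine ⟨0, zero_mem _, fun h => ?_⟩
        have : (⟨(0 : (lp (fun _ : P => ℂ) 2) →L[ℂ] (lp (fun _ : P => ℂ) 2)), hsubA 0 (zero_mem _)⟩ : ((NonUnitalAlgebra.adjoin ℂ (Set.range lamP)).topologicalClosure)) = 0 := rfl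
        rw [this]
        simp
      | add x y hx hy ihx ihy =>
        obtain ⟨bx, hbx, hbx'⟩ := ihx
        obtain ⟨by', hby, hby'⟩ := ihy
        refine ⟨bx + by', add_mem hbx hby, fun h => ?_⟩
        have : (⟨x + y, hsubA _ (add_mem hx hy)⟩ : ((NonUnitalAlgebra.adjoin ℂ (Set.range lamP)).topologicalClosure))
            = ⟨x, hsubA x hx⟩ + ⟨y, hsubA y hy⟩ := rfl
        rw [this, map_add]
        simp only [ContinuousLinearMap.add_apply, map_add]
        rw [hbx' h, hby' h]
      | smul c x hx ihx =>
        obtain ⟨bx, hbx, hbx'⟩ := ihx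
        refine ⟨c • bx, Submodule.smul_mem _ _ hbx, fun h => ?_⟩
        have : (⟨c • x, hsubA _ (Submodule.smul_mem _ _ hx)⟩ : ((NonUnitalAlgebra.adjoin ℂ (Set.range lamP)).topologicalClosure))
            = c • ⟨x, hsubA x hx⟩ := rfl
        rw [this, map_smul]
        simp only [ContinuousLinearMap.smul_apply, map_smul]
        rw [hbx' h]
    obtain ⟨b', hb'M, hb'⟩ := hkey a' ha'span
    refine ⟨b', hb'M, ?_⟩
    -- estimate ‖a - b'‖
    have hnorm_incl : ∀ x : (lp (fun _ : P => ℂ) 2), ‖incl q x‖ = ‖x‖ := fun x =>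
      (hincl_iso q).norm_map_of_map_zero (map_zero _) x
    have hest : ∀ h : (lp (fun _ : P => ℂ) 2), ‖b' h - (a : (lp (fun _ : P => ℂ) 2) →L[ℂ] (lp (fun _ : P => ℂ) 2)) h‖ ≤ (‖δ‖ * ‖a' - (a : (lp (fun _ : P => ℂ) 2) →L[ℂ] (lp (fun _ : P => ℂ) 2))‖) * ‖h‖ := by
      intro h
      have h1 : css_slice (q*q) (δ a (incl q h)) = (a : (lp (fun _ : P => ℂ) 2) →L[ℂ] (lp (fun _ : P => ℂ) 2)) h := by
        rw [hδa, htens, hslice_incl, if_pos rfl]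
      have h2 : b' h - (a : (lp (fun _ : P => ℂ) 2) →L[ℂ] (lp (fun _ : P => ℂ) 2)) h
          = css_slice (q*q) (δ (⟨a', hsubA a' ha'span⟩ - a) (incl q h)) := by
        rw [map_sub δ, ContinuousLinearMap.sub_apply, map_sub, h1, hb' h]
      rw [h2]
      calc ‖css_slice (q*q) (δ (⟨a', hsubA a' ha'span⟩ - a) (incl q h))‖
          ≤ ‖δ (⟨a', hsubA a' ha'span⟩ - a) (incl q h)‖ := css_norm_slice_apply_le _ _
        _ ≤ ‖δ (⟨a', hsubA a' ha'span⟩ - a)‖ * ‖incl q h‖ :=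
            ContinuousLinearMap.le_opNorm _ _
        _ ≤ (‖δ‖ * ‖(⟨a', hsubA a' ha'span⟩ - a : ((NonUnitalAlgebra.adjoin ℂ (Set.range lamP)).topologicalClosure))‖) * ‖incl q h‖ := by
            gcongr; exact css_le_opNorm _ δ _
        _ = (‖δ‖ * ‖a' - (a : (lp (fun _ : P => ℂ) 2) →L[ℂ] (lp (fun _ : P => ℂ) 2))‖) * ‖h‖ := by
            rw [hnorm_incl]
            rfl
    have hb'a : ‖b' - (a : (lp (fun _ : P => ℂ) 2) →L[ℂ] (lp (fun _ : P => ℂ) 2))‖ ≤ ‖δ‖ * ‖a' - (a : (lp (fun _ : P => ℂ) 2) →L[ℂ] (lp (fun _ : P => ℂ) 2))‖ := by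
      refine ContinuousLinearMap.opNorm_le_bound _ (by positivity) ?_
      intro h
      simpa using hest h
    have hd : ‖a' - (a : (lp (fun _ : P => ℂ) 2) →L[ℂ] (lp (fun _ : P => ℂ) 2))‖ < ε / (‖δ‖ + 1) := by
      rw [← dist_eq_norm, dist_comm]
      exact ha'close
    calc dist (a : (lp (fun _ : P => ℂ) 2) →L[ℂ] (lp (fun _ : P => ℂ) 2)) b' = ‖b' - (a : (lp (fun _ : P => ℂ) 2) →L[ℂ] (lp (fun _ : P => ℂ) 2))‖ := by
          rw [dist_comm, dist_eq_norm]
      _ ≤ ‖δ‖ * ‖a' - (a : (lp (fun _ : P => ℂ) 2) →L[ℂ] (lp (fun _ : P => ℂ) 2))‖ := hb'a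
      _ ≤ (‖δ‖ + 1) * ‖a' - (a : (lp (fun _ : P => ℂ) 2) →L[ℂ] (lp (fun _ : P => ℂ) 2))‖ :=
          mul_le_mul_of_nonneg_right (by linarith) (norm_nonneg _)
      _ < (‖δ‖ + 1) * (ε / (‖δ‖ + 1)) := by
          apply mul_lt_mul_of_pos_left hd hC
      _ = ε := by field_simp
  · -- closed span ⊆ spectral subspace
    intro ha
    have haclos : (a : (lp (fun _ : P => ℂ) 2) →L[ℂ] (lp (fun _ : P => ℂ) 2)) ∈ closure ((Submodule.span ℂ {T : (lp (fun _ : P => ℂ) 2) →L[ℂ] (lp (fun _ : P => ℂ) 2) | ∃ p : P, φ p = q ∧ T = lamP p}) : Set ((lp (fun _ : P => ℂ) 2) →L[ℂ] (lp (fun _ : P => ℂ) 2))) := ha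
    obtain ⟨b, hbM, hba⟩ := mem_closure_iff_seq_limit.1 haclos
    -- δ on elements of M
    have hspan : ∀ T (hT : T ∈ (Submodule.span ℂ {T : (lp (fun _ : P => ℂ) 2) →L[ℂ] (lp (fun _ : P => ℂ) 2) | ∃ p : P, φ p = q ∧ T = lamP p})) (s : Q) (x : (lp (fun _ : P => ℂ) 2)),
        δ ⟨T, hMA T hT⟩ (incl s x) = incl (q * s) (T x) := by
      intro T hT
      induction hT using Submodule.span_induction with
      | mem T hT =>
        obtain ⟨p, hpq, rfl⟩ := hT
        intro s x
        have : (⟨lamP p, hMA (lamP p) (Submodule.subset_span ⟨p, hpq, rfl⟩)⟩ : ((NonUnitalAlgebra.adjoin ℂ (Set.range lamP)).topologicalClosure))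
            = ⟨lamP p, (NonUnitalAlgebra.adjoin ℂ (Set.range lamP)).le_topologicalClosure
                (NonUnitalAlgebra.subset_adjoin ℂ ⟨p, rfl⟩)⟩ := rfl
        rw [this, hδ, htens, hpq]
      | zero =>
        intro s x
        have : (⟨(0 : (lp (fun _ : P => ℂ) 2) →L[ℂ] (lp (fun _ : P => ℂ) 2)), hMA 0 (zero_mem _)⟩ : ((NonUnitalAlgebra.adjoin ℂ (Set.range lamP)).topologicalClosure)) = 0 := rfl
        rw [this]
        simp
      | add x y hx hy ihx ihy =>
        intro s v
        have : (⟨x + y, hMA _ (add_mem hx hy)⟩ : ((NonUnitalAlgebra.adjoin ℂ (Set.range lamP)).topologicalClosure))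
            = ⟨x, hMA x hx⟩ + ⟨y, hMA y hy⟩ := rfl
        rw [this, map_add]
        simp only [ContinuousLinearMap.add_apply, map_add]
        rw [ihx s v, ihy s v]
      | smul c x hx ihx =>
        intro s v
        have : (⟨c • x, hMA _ (Submodule.smul_mem _ _ hx)⟩ : ((NonUnitalAlgebra.adjoin ℂ (Set.range lamP)).topologicalClosure))
            = c • ⟨x, hMA x hx⟩ := rfl
        rw [this, map_smul]
        simp only [ContinuousLinearMap.smul_apply, map_smul]
        rw [ihx s v]
    -- δ a = tens a q via density
    apply css_clm_ext_lp (α := P × Q)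
    rintro ⟨r, s⟩
    rw [← hincl s r]
    set x₀ : (lp (fun _ : P => ℂ) 2) := lp.single 2 r (1:ℂ) with hx₀
    -- limit of δ (b n) (incl s x₀)
    let B : ℕ → ↥((NonUnitalAlgebra.adjoin ℂ (Set.range lamP)).topologicalClosure) := fun n => ⟨b n, hMA (b n) (hbM n)⟩
    have hBa : Filter.Tendsto B Filter.atTop (nhds a) := by
      rw [tendsto_subtype_rng]
      exact hba
    have h1 : Filter.Tendsto (fun n => δ (B n) (incl s x₀)) Filter.atTop
        (nhds (δ a (incl s x₀))) := by
      have hδB : Filter.Tendsto (fun n => δ (B n)) Filter.atTop (nhds (δ a)) :=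
        (δ.continuous.tendsto a).comp hBa
      exact ((ContinuousLinearMap.apply ℂ (lp (fun _ : P × Q => ℂ) 2) (incl s x₀)).continuous.tendsto (δ a)).comp hδB
    have h2 : ∀ n, δ (B n) (incl s x₀) = incl (q * s) (b n x₀) := fun n =>
      hspan (b n) (hbM n) s x₀
    have h3 : Filter.Tendsto (fun n => incl (q * s) (b n x₀)) Filter.atTop
        (nhds (incl (q * s) ((a : (lp (fun _ : P => ℂ) 2) →L[ℂ] (lp (fun _ : P => ℂ) 2)) x₀))) := by
      have hbx : Filter.Tendsto (fun n => b n x₀) Filter.atTop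
          (nhds ((a : (lp (fun _ : P => ℂ) 2) →L[ℂ] (lp (fun _ : P => ℂ) 2)) x₀)) :=
        ((ContinuousLinearMap.apply ℂ (lp (fun _ : P => ℂ) 2) x₀).continuous.tendsto _).comp hba
      exact ((incl (q * s)).continuous.tendsto _).comp hbx
    have h4 : δ a (incl s x₀) = incl (q * s) ((a : (lp (fun _ : P => ℂ) 2) →L[ℂ] (lp (fun _ : P => ℂ) 2)) x₀) := by
      refine tendsto_nhds_unique ?_ h3
      simpa only [h2] using h1
    rw [h4, htens]
end

section
/- Let P be a countable cancellative semigroup with the finite divisor property. Then there exists a net (indexed by finite subsets F of P, ordered by inclusion) of finite-rank orthogonal projections Q_F on ℓ²(P), each being the projection onto the span of {e_r : r ∈ R_p for some p ∈ F}, such that: (1) each range of Q_F is coinvariant for the left regular representation algebra A_r(P); (2) Q_F a Q_F → a and Q_F a* Q_F → a* in the strong operator topology for every a ∈ A_r(P). In particular, the compressions a ↦ Q_F a Q_F form a net of finite-dimensional completely contractive representations converging point-strongly to the identity, and A_r(P) is residually finite-dimensional. -/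
set_option synthInstance.maxHeartbeats 1000000
set_option maxHeartbeats 1000000

open scoped ENNReal InnerProductSpace ComplexConjugate
open Filter

section Aux

variable {P : Type*} [DecidableEq P]

private lemma FDP_ext_inner_single {v w : lp (fun _ : P => ℂ) 2}
    (h : ∀ s : P, ⟪v, lp.single 2 s (1 : ℂ)⟫_ℂ = ⟪w, lp.single 2 s (1 : ℂ)⟫_ℂ) : v = w := by
  apply lp.ext
  funext s
  have hs := h s
  rw [lp.inner_single_right, lp.inner_single_right] at hs
  simp only [RCLike.inner_apply, mul_one, one_mul] at hs
  exact (starRingEnd ℂ).injective hs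

private lemma FDP_inner_single_single (r s : P) :
    ⟪(lp.single 2 r (1 : ℂ) : lp (fun _ : P => ℂ) 2), lp.single 2 s (1 : ℂ)⟫_ℂ
      = if s = r then 1 else 0 := by
  rw [lp.inner_single_right, lp.single_apply]
  by_cases h : s = r <;> simp [h]

end Aux

/-- Let `P` be a countable cancellative semigroup with the finite divisor
property, `lam` its left regular representation on `ℓ²(P)`, and `A_r(P)` the
norm-closed algebra it generates.  For a finite set `F ⊆ P` let `Y F` be the
span of `{e r : r ∈ R_p, p ∈ F}`.  Then there is a net (indexed by finite
subsets of `P`) of finite-rank orthogonal projections `Q F` with range `Y F`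
such that each `Y F` is coinvariant for `A_r(P)`, the compressions
`Q F a Q F` converge to `a` and `Q F a⋆ Q F` to `a⋆` in the strong operator
topology, and the compressions are norming; in particular `A_r(P)` is
residually finite-dimensional. -/
theorem finite_divisor_property_gives_EL_approx_of_identity
    {P : Type*} [Semigroup P] [IsCancelMul P] [Countable P] [DecidableEq P]
    (hFDP : ∀ p : P, {r : P | ∃ q : P, p = q * r}.Finite ∧
      {q : P | ∃ r : P, p = q * r}.Finite)
    (lam : P → (lp (fun _ : P => ℂ) 2 →L[ℂ] lp (fun _ : P => ℂ) 2))
    (hlam : ∀ p q : P, lam p (lp.single 2 q (1 : ℂ)) = lp.single 2 (p * q) (1 : ℂ)) :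
    ∃ Qp : Finset P → (lp (fun _ : P => ℂ) 2 →L[ℂ] lp (fun _ : P => ℂ) 2),
      (∀ F : Finset P,
        IsIdempotentElem (Qp F) ∧ IsSelfAdjoint (Qp F) ∧
        LinearMap.range (Qp F).toLinearMap =
          Submodule.span ℂ ((fun t : P => lp.single 2 t (1 : ℂ)) ''
            {r : P | ∃ p ∈ F, ∃ q : P, p = q * r}) ∧
        FiniteDimensional ℂ
          (Submodule.span ℂ ((fun t : P => lp.single 2 t (1 : ℂ)) ''
            {r : P | ∃ p ∈ F, ∃ q : P, p = q * r}))) ∧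
      (∀ F : Finset P,
        ∀ a ∈ (NonUnitalAlgebra.adjoin ℂ (Set.range lam)).topologicalClosure,
        ∀ x ∈ Submodule.span ℂ ((fun t : P => lp.single 2 t (1 : ℂ)) ''
            {r : P | ∃ p ∈ F, ∃ q : P, p = q * r}),
          ContinuousLinearMap.adjoint a x ∈
            Submodule.span ℂ ((fun t : P => lp.single 2 t (1 : ℂ)) ''
              {r : P | ∃ p ∈ F, ∃ q : P, p = q * r})) ∧
      (∀ a ∈ (NonUnitalAlgebra.adjoin ℂ (Set.range lam)).topologicalClosure,
        ∀ x : lp (fun _ : P => ℂ) 2,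
          Tendsto (fun F : Finset P => Qp F (a (Qp F x))) atTop (nhds (a x)) ∧
          Tendsto (fun F : Finset P =>
              Qp F (ContinuousLinearMap.adjoint a (Qp F x))) atTop
            (nhds (ContinuousLinearMap.adjoint a x))) ∧
      (∀ a ∈ (NonUnitalAlgebra.adjoin ℂ (Set.range lam)).topologicalClosure,
        (⨆ F : Finset P, ‖(Qp F).comp (a.comp (Qp F))‖) = ‖a‖) := by
  classical
  let e : P → lp (fun _ : P => ℂ) 2 := fun t => lp.single 2 t (1 : ℂ)
  let S : Finset P → Set P := fun F => {r : P | ∃ p ∈ F, ∃ q : P, p = q * r}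
  let Y : Finset P → Submodule ℂ (lp (fun _ : P => ℂ) 2) := fun F => Submodule.span ℂ (e '' S F)
  -- finiteness
  have hSfin : ∀ F, (S F).Finite := by
    intro F
    have : S F ⊆ ⋃ p ∈ (F : Set P), {r : P | ∃ q : P, p = q * r} := by
      rintro r ⟨p, hp, q, hq⟩
      exact Set.mem_biUnion hp ⟨q, hq⟩
    exact Set.Finite.subset (Set.Finite.biUnion F.finite_toSet fun p _ => (hFDP p).1) this
  have hYfin : ∀ F, FiniteDimensional ℂ (Y F) := fun F =>
    FiniteDimensional.span_of_finite ℂ ((hSfin F).image e)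
  haveI : ∀ F, FiniteDimensional ℂ (Y F) := hYfin
  haveI hYcomp : ∀ F, CompleteSpace (Y F) := fun F => FiniteDimensional.complete ℂ _
  -- the projections
  let Q : Finset P → (lp (fun _ : P => ℂ) 2 →L[ℂ] lp (fun _ : P => ℂ) 2) := fun F => (Y F).subtypeL ∘L Submodule.orthogonalProjectionOnto (Y F)
  have hQmem : ∀ F x, Q F x ∈ Y F := fun F x => (Submodule.orthogonalProjectionOnto (Y F) x).2
  have hQfix : ∀ F, ∀ x ∈ Y F, Q F x = x := by
    intro F x hx
    exact congrArg Subtype.val (Submodule.orthogonalProjectionOnto_mem_subspace_eq_self (K := Y F) ⟨x, hx⟩)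
  have hQnorm : ∀ F x, ‖Q F x‖ ≤ ‖x‖ := by
    intro F x
    calc ‖Q F x‖ = ‖Submodule.orthogonalProjectionOnto (Y F) x‖ := rfl
    _ ≤ ‖Submodule.orthogonalProjectionOnto (Y F)‖ * ‖x‖ := (Submodule.orthogonalProjectionOnto (Y F)).le_opNorm x
    _ ≤ 1 * ‖x‖ := by
        exact mul_le_mul_of_nonneg_right (Submodule.orthogonalProjectionOnto_norm_le (Y F)) (norm_nonneg x)
    _ = ‖x‖ := one_mul _
  have hQopnorm : ∀ F, ‖Q F‖ ≤ 1 := fun F =>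
    ContinuousLinearMap.opNorm_le_bound _ zero_le_one (fun x => by rw [one_mul]; exact hQnorm F x)
  -- membership of basis vectors
  have hmemY : ∀ (F : Finset P) (r : P), r ∈ S F → e r ∈ Y F := by
    intro F r hr
    exact Submodule.subset_span ⟨r, hr, rfl⟩
  -- Q F x → x
  have htend1 : ∀ x : lp (fun _ : P => ℂ) 2, Tendsto (fun F : Finset P => Q F x) atTop (nhds x) := by
    intro x
    rw [Metric.tendsto_nhds]
    intro ε hε
    have hsum : HasSum (fun t : P => lp.single 2 t (x t)) x :=
      lp.hasSum_single (by norm_num) x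
    rw [HasSum, Metric.tendsto_nhds] at hsum
    obtain ⟨G, hG⟩ := (hsum (ε / 3) (by linarith)).exists
    set y : lp (fun _ : P => ℂ) 2 := ∑ t ∈ G, lp.single 2 t (x t) with hy
    have hdist : ‖x - y‖ < ε / 3 := by
      rw [← dist_eq_norm, dist_comm]; exact hG
    have hyY : ∀ F : Finset P, G.image (fun t => t * t) ⊆ F → y ∈ Y F := by
      intro F hF
      refine Submodule.sum_mem _ fun t ht => ?_
      have h2 : (lp.single 2 t ((x t : ℂ) • (1 : ℂ)) : lp (fun _ : P => ℂ) 2) = (x t : ℂ) • lp.single 2 t (1 : ℂ) :=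
        lp.single_smul (E := fun _ : P => ℂ) 2 t (x t) (1 : ℂ)
      rw [smul_eq_mul, mul_one] at h2
      rw [h2]
      refine Submodule.smul_mem _ _ (hmemY F t ⟨t * t, hF (Finset.mem_image_of_mem _ ht), t, rfl⟩)
    filter_upwards [eventually_ge_atTop (G.image (fun t => t * t))] with F hF
    have hyF := hyY F hF
    have : Q F x - x = Q F (x - y) + (y - x) := by
      rw [map_sub, hQfix F y hyF]; abel
    rw [dist_eq_norm, this]
    calc ‖Q F (x - y) + (y - x)‖ ≤ ‖Q F (x - y)‖ + ‖y - x‖ := norm_add_le _ _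
    _ ≤ ‖x - y‖ + ‖y - x‖ := by
        linarith [hQnorm F (x - y)]
    _ = ‖x - y‖ + ‖x - y‖ := by rw [norm_sub_rev y x]
    _ < ε := by linarith
  -- compression converges strongly, for arbitrary bounded a
  have htend2 : ∀ (a : lp (fun _ : P => ℂ) 2 →L[ℂ] lp (fun _ : P => ℂ) 2) (x : lp (fun _ : P => ℂ) 2),
      Tendsto (fun F : Finset P => Q F (a (Q F x))) atTop (nhds (a x)) := by
    intro a x
    have hax : Tendsto (fun F : Finset P => a (Q F x)) atTop (nhds (a x)) :=
      (a.continuous.tendsto _).comp (htend1 x)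
    have h0 : Tendsto (fun F : Finset P => Q F (a (Q F x)) - Q F (a x)) atTop (nhds 0) := by
      refine squeeze_zero_norm (fun F => ?_) (tendsto_iff_norm_sub_tendsto_zero.mp hax)
      rw [← map_sub]
      exact hQnorm F _
    have h1 : Tendsto (fun F : Finset P => Q F (a x)) atTop (nhds (a x)) := htend1 (a x)
    have := h0.add h1
    rw [zero_add] at this
    simpa using this
  -- coinvariance
  have hadj1 : ∀ p t : P,
      ContinuousLinearMap.adjoint (lam p) (e (p * t)) = e t := by
    intro p t
    apply FDP_ext_inner_single
    intro s
    rw [ContinuousLinearMap.adjoint_inner_left, hlam]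
    show ⟪e (p * t), e (p * s)⟫_ℂ = ⟪e t, e s⟫_ℂ
    show ⟪(lp.single 2 (p*t) (1:ℂ) : lp (fun _ : P => ℂ) 2), lp.single 2 (p*s) (1:ℂ)⟫_ℂ = ⟪(lp.single 2 t (1:ℂ) : lp (fun _ : P => ℂ) 2), lp.single 2 s (1:ℂ)⟫_ℂ
    rw [FDP_inner_single_single, FDP_inner_single_single]
    congr 1
    simp only [eq_iff_iff]
    exact ⟨fun h => by rw [mul_left_cancel h], fun h => by rw [h]⟩
  have hadj2 : ∀ p r : P, (∀ t, r ≠ p * t) →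
      ContinuousLinearMap.adjoint (lam p) (e r) = 0 := by
    intro p r hr
    apply FDP_ext_inner_single
    intro s
    rw [ContinuousLinearMap.adjoint_inner_left, hlam]
    show ⟪(lp.single 2 r (1:ℂ) : lp (fun _ : P => ℂ) 2), lp.single 2 (p*s) (1:ℂ)⟫_ℂ = ⟪(0 : lp (fun _ : P => ℂ) 2), lp.single 2 s (1:ℂ)⟫_ℂ
    rw [FDP_inner_single_single, if_neg (fun h => hr s h.symm), inner_zero_left]
  have hcoinv0 : ∀ (F : Finset P) (p : P), ∀ x ∈ Y F,
      ContinuousLinearMap.adjoint (lam p) x ∈ Y F := by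
    intro F p x hx
    induction hx using Submodule.span_induction with
    | mem x hx =>
      obtain ⟨r, ⟨p', hp'F, q, hq⟩, rfl⟩ := hx
      by_cases h : ∃ t, r = p * t
      · obtain ⟨t, rfl⟩ := h
        rw [hadj1]
        exact hmemY F t ⟨p', hp'F, q * p, by rw [hq, mul_assoc]⟩
      · rw [hadj2 p r (fun t ht => h ⟨t, ht⟩)]
        exact Submodule.zero_mem _
    | zero => simp
    | add u v hu hv hu' hv' => rw [map_add]; exact Submodule.add_mem _ hu' hv'
    | smul c u hu hu' => rw [map_smul]; exact Submodule.smul_mem _ _ hu'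
  have hcoinv1 : ∀ (F : Finset P), ∀ a ∈ NonUnitalAlgebra.adjoin ℂ (Set.range lam),
      ∀ x ∈ Y F, ContinuousLinearMap.adjoint a x ∈ Y F := by
    intro F a ha
    induction ha using NonUnitalAlgebra.adjoin_induction with
    | mem a ha =>
      obtain ⟨p, rfl⟩ := ha
      exact hcoinv0 F p
    | add a b _ _ ha hb =>
      intro x hx
      rw [map_add, ContinuousLinearMap.add_apply]
      exact Submodule.add_mem _ (ha x hx) (hb x hx)
    | zero => intro x hx; simp
    | mul a b _ _ ha hb =>
      intro x hx
      have : ContinuousLinearMap.adjoint (a * b) = ContinuousLinearMap.adjoint b ∘L ContinuousLinearMap.adjoint a := by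
        rw [← ContinuousLinearMap.adjoint_comp]; rfl
      rw [this]
      exact hb _ (ha x hx)
    | smul c a _ ha =>
      intro x hx
      have h := ha x hx
      rw [← ContinuousLinearMap.star_eq_adjoint] at h ⊢
      rw [star_smul, ContinuousLinearMap.smul_apply]
      exact Submodule.smul_mem _ _ h
  have hYclosed : ∀ F, IsClosed ((Y F : Set (lp (fun _ : P => ℂ) 2))) := fun F =>
    Submodule.closed_of_finiteDimensional (Y F)
  have hcoinv : ∀ (F : Finset P),
      ∀ a ∈ (NonUnitalAlgebra.adjoin ℂ (Set.range lam)).topologicalClosure,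
      ∀ x ∈ Y F, ContinuousLinearMap.adjoint a x ∈ Y F := by
    intro F a ha x hx
    have ha' : a ∈ closure ((NonUnitalAlgebra.adjoin ℂ (Set.range lam) : Set (lp (fun _ : P => ℂ) 2 →L[ℂ] lp (fun _ : P => ℂ) 2))) := ha
    obtain ⟨u, hu, hconv⟩ := mem_closure_iff_seq_limit.mp ha'
    have hadj : Tendsto (fun n => ContinuousLinearMap.adjoint (u n)) atTop
        (nhds (ContinuousLinearMap.adjoint a)) :=
      (ContinuousLinearMap.adjoint.continuous.tendsto a).comp hconv
    have happ : Tendsto (fun n => ContinuousLinearMap.adjoint (u n) x) atTop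
        (nhds (ContinuousLinearMap.adjoint a x)) := by
      have : Continuous (fun T : lp (fun _ : P => ℂ) 2 →L[ℂ] lp (fun _ : P => ℂ) 2 => T x) :=
        (ContinuousLinearMap.apply ℂ (lp (fun _ : P => ℂ) 2) x).continuous
      exact (this.tendsto _).comp hadj
    exact (hYclosed F).mem_of_tendsto happ
      (Eventually.of_forall fun n => hcoinv1 F (u n) (hu n) x hx)
  -- assemble
  refine ⟨Q, ?_, ?_, ?_, ?_⟩
  · intro F
    refine ⟨?_, by exact isSelfAdjoint_starProjection (Y F), ?_, hYfin F⟩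
    · refine ContinuousLinearMap.ext fun x => ?_
      rw [ContinuousLinearMap.mul_apply]
      exact hQfix F (Q F x) (hQmem F x)
    · apply le_antisymm
      · rintro x ⟨y, rfl⟩
        exact hQmem F y
      · intro x hx
        exact ⟨x, hQfix F x hx⟩
  · intro F a ha x hx
    exact hcoinv F a ha x hx
  · intro a _ x
    exact ⟨htend2 a x, htend2 (ContinuousLinearMap.adjoint a) x⟩
  · intro a _
    have hub : ∀ F, ‖(Q F).comp (a.comp (Q F))‖ ≤ ‖a‖ := by
      intro F
      calc ‖(Q F).comp (a.comp (Q F))‖ ≤ ‖Q F‖ * ‖a.comp (Q F)‖ :=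
            ContinuousLinearMap.opNorm_comp_le _ _
      _ ≤ ‖Q F‖ * (‖a‖ * ‖Q F‖) := by
          exact mul_le_mul_of_nonneg_left (ContinuousLinearMap.opNorm_comp_le _ _) (norm_nonneg _)
      _ ≤ 1 * (‖a‖ * 1) := by
          gcongr
          · exact hQopnorm F
          · exact hQopnorm F
      _ = ‖a‖ := by ring
    have hbdd : BddAbove (Set.range fun F : Finset P => ‖(Q F).comp (a.comp (Q F))‖) := by
      refine ⟨‖a‖, ?_⟩
      rintro _ ⟨F, rfl⟩
      exact hub F
    refine le_antisymm (ciSup_le hub) ?_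
    have hsupnn : (0 : ℝ) ≤ ⨆ F : Finset P, ‖(Q F).comp (a.comp (Q F))‖ :=
      le_trans (norm_nonneg _) (le_ciSup hbdd (∅ : Finset P))
    refine a.opNorm_le_bound hsupnn ?_
    intro x
    have hlim : Tendsto (fun F : Finset P => ‖Q F (a (Q F x))‖) atTop (nhds ‖a x‖) :=
      (continuous_norm.tendsto _).comp (htend2 a x)
    refine le_of_tendsto hlim (Eventually.of_forall fun F => ?_)
    calc ‖Q F (a (Q F x))‖ = ‖((Q F).comp (a.comp (Q F))) x‖ := rfl
    _ ≤ ‖(Q F).comp (a.comp (Q F))‖ * ‖x‖ := ContinuousLinearMap.le_opNorm _ _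
    _ ≤ (⨆ F : Finset P, ‖(Q F).comp (a.comp (Q F))‖) * ‖x‖ :=
        mul_le_mul_of_nonneg_right (le_ciSup hbdd F) (norm_nonneg x)
end

section
/- Let H be a Hilbert space, A ⊆ B(H) an operator algebra, and π : A → B(K) a representation admitting an Exel–Loring approximation, i.e., a net of representations π_λ : A → B(K) with each C*(π_λ(A))K finite-dimensional, such that π_λ(a) → π(a) and π_λ(a)* → π(a)* strongly for all a ∈ A. If L ⊆ K is a closed subspace reducing for π(A) (invariant under π(a) and π(a)* for all a ∈ A), then the restricted representation a ↦ π(a)|_L also admits an Exel–Loring approximation (acting on L, assuming L is infinite-dimensional, via isometric transfers of the finite-dimensional essential spaces into L). -/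
set_option maxHeartbeats 1000000
set_option synthInstance.maxHeartbeats 1000000
open Filter Module

local notation "⟪" x ", " y "⟫" => @inner ℂ _ _ x y

section Aux
variable {K : Type*} [NormedAddCommGroup K] [InnerProductSpace ℂ K]

lemma aux_exists_finrank (V : Submodule ℂ K) (hV : ¬ FiniteDimensional ℂ ↥V) (n : ℕ) :
    ∃ W : Submodule ℂ K, W ≤ V ∧ FiniteDimensional ℂ ↥W ∧ finrank ℂ ↥W = n := by
  have hrank : (n : Cardinal) ≤ Module.rank ℂ ↥V := by
    have h1 : ¬ (Module.rank ℂ ↥V < Cardinal.aleph0) := by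
      rw [rank_lt_aleph0_iff]; exact hV
    exact le_trans (Cardinal.nat_lt_aleph0 n).le (le_of_not_gt h1)
  obtain ⟨f, hf⟩ := exists_linearIndependent_of_le_rank hrank
  have hg : LinearIndependent ℂ (fun i => (V.subtype (f i) : K)) :=
    hf.map' V.subtype V.ker_subtype
  refine ⟨Submodule.span ℂ (Set.range fun i => (V.subtype (f i) : K)), ?_, ?_, ?_⟩
  · rw [Submodule.span_le]
    rintro - ⟨i, rfl⟩
    exact (f i).2
  · exact FiniteDimensional.span_of_finite ℂ (Set.finite_range _)
  · rw [finrank_span_eq_card hg, Fintype.card_fin]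

lemma aux_isometry_of_finrank_eq (W W' : Submodule ℂ K) [FiniteDimensional ℂ ↥W]
    [FiniteDimensional ℂ ↥W'] (h : finrank ℂ ↥W = finrank ℂ ↥W') :
    Nonempty (↥W ≃ₗᵢ[ℂ] ↥W') :=
  ⟨(stdOrthonormalBasis ℂ ↥W).repr.trans
    ((LinearIsometryEquiv.piLpCongrLeft 2 ℂ ℂ (finCongr h)).trans
      (stdOrthonormalBasis ℂ ↥W').repr.symm)⟩

lemma aux_not_fd_inf {K : Type*} [NormedAddCommGroup K] [InnerProductSpace ℂ K] [CompleteSpace K]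
    (L : Submodule ℂ K) [CompleteSpace ↥L] (hinf : ¬ FiniteDimensional ℂ ↥L)
    (M : Submodule ℂ K) [FiniteDimensional ℂ ↥M] :
    ¬ FiniteDimensional ℂ ↥(L ⊓ Mᗮ) := by
  intro hfd
  apply hinf
  haveI : CompleteSpace ↥M := FiniteDimensional.complete ℂ ↥M
  set g : ↥L →ₗ[ℂ] ↥M := (Submodule.orthogonalProjectionOnto M).toLinearMap ∘ₗ L.subtype with hgdef
  have hker : LinearMap.ker g = Submodule.comap L.subtype (L ⊓ Mᗮ) := by
    ext x
    simp only [LinearMap.mem_ker, Submodule.mem_comap, Submodule.mem_inf, hgdef,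
      LinearMap.comp_apply, ContinuousLinearMap.coe_coe, Submodule.coe_subtype]
    rw [Submodule.orthogonalProjectionOnto_eq_zero_iff]
    exact ⟨fun h => ⟨x.2, h⟩, fun h => h.2⟩
  have e1 : ↥(LinearMap.ker g) ≃ₗ[ℂ] ↥(L ⊓ Mᗮ) := by
    rw [hker]; exact Submodule.comapSubtypeEquivOfLe inf_le_left
  haveI hkerfd : FiniteDimensional ℂ ↥(LinearMap.ker g) := e1.symm.finiteDimensional
  haveI hrangefd : FiniteDimensional ℂ ↥(LinearMap.range g) := inferInstance
  haveI hquot : FiniteDimensional ℂ (↥L ⧸ LinearMap.ker g) :=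
    (g.quotKerEquivRange).symm.finiteDimensional
  exact IsNoetherian.iff_fg.mp
    ((isNoetherian_iff_submodule_quotient (LinearMap.ker g)).mpr
      ⟨IsNoetherian.iff_fg.mpr hkerfd, IsNoetherian.iff_fg.mpr hquot⟩)

end Aux


section Swap
variable {K : Type*} [NormedAddCommGroup K] [InnerProductSpace ℂ K] [CompleteSpace K]

lemma aux_inner_expand {a b c a' b' c' : K} (hab' : ⟪a, b'⟫ = 0) (hac' : ⟪a, c'⟫ = 0)
    (hba' : ⟪b, a'⟫ = 0) (hbc' : ⟪b, c'⟫ = 0) (hca' : ⟪c, a'⟫ = 0) (hcb' : ⟪c, b'⟫ = 0) :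
    ⟪a + b + c, a' + b' + c'⟫ = ⟪a, a'⟫ + ⟪b, b'⟫ + ⟪c, c'⟫ := by
  simp [inner_add_left, inner_add_right, hab', hac', hba', hbc', hca', hcb']

lemma swap_isometry (L : Submodule ℂ K) [CompleteSpace ↥L]
    (C : Submodule ℂ K) [CompleteSpace ↥C]
    (hinf : ¬ FiniteDimensional ℂ ↥(L ⊓ C))
    (M : Submodule ℂ K) [FiniteDimensional ℂ ↥M]
    (hPM : ∀ v ∈ M, ((Submodule.orthogonalProjectionOnto L v : ↥L) : K) ∈ M)
    (G : Submodule ℂ K) [FiniteDimensional ℂ ↥G] :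
    ∃ u : K →L[ℂ] K,
      (∀ x y : K, ⟪u x, u y⟫ = ⟪x, y⟫) ∧
      (∀ v ∈ M, u v ∈ L) ∧
      (∀ v ∈ M, ‖u v - v‖ ≤ 2 * ‖v - ((Submodule.orthogonalProjectionOnto L v : ↥L) : K)‖) ∧
      (∀ x ∈ L, ∀ y ∈ G, ‖u x - x‖ ≤ 2 * ‖((Submodule.orthogonalProjectionOnto C x : ↥C) : K) - y‖) := by
  classical
  set E : Submodule ℂ K := M ⊓ L with hEdef
  haveI : FiniteDimensional ℂ ↥E := Submodule.finiteDimensional_of_le inf_le_left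
  set W : Submodule ℂ K := Eᗮ ⊓ M with hWdef
  haveI : FiniteDimensional ℂ ↥W := Submodule.finiteDimensional_of_le inf_le_right
  haveI : CompleteSpace ↥(L ⊓ C) := by
    have h1 : IsClosed (L : Set K) :=
      (completeSpace_coe_iff_isComplete.mp ‹CompleteSpace ↥L›).isClosed
    have h2 : IsClosed (C : Set K) :=
      (completeSpace_coe_iff_isComplete.mp ‹CompleteSpace ↥C›).isClosed
    have h3 : IsClosed ((L ⊓ C : Submodule ℂ K) : Set K) := by
      rw [Submodule.coe_inf]
      exact h1.inter h2
    exact h3.completeSpace_coe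
  obtain ⟨W', hW'le, hW'fd, hW'rank⟩ :=
    aux_exists_finrank ((L ⊓ C) ⊓ (M ⊔ G)ᗮ)
      (aux_not_fd_inf (L ⊓ C) hinf (M ⊔ G)) (finrank ℂ ↥W)
  haveI := hW'fd
  obtain ⟨f⟩ := aux_isometry_of_finrank_eq W W' hW'rank.symm
  have hW'L : W' ≤ L := hW'le.trans (inf_le_left.trans inf_le_left)
  have hW'C : W' ≤ C := hW'le.trans (inf_le_left.trans inf_le_right)
  have hW'Mo : W' ≤ Mᗮ :=
    hW'le.trans (inf_le_right.trans (Submodule.orthogonal_le le_sup_left))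
  have hW'Go : W' ≤ Gᗮ :=
    hW'le.trans (inf_le_right.trans (Submodule.orthogonal_le le_sup_right))
  have hWM : W ≤ M := inf_le_right
  -- orthogonality of W and W'
  have hWW' : ∀ w ∈ W, ∀ w' ∈ W', ⟪w, w'⟫ = 0 := fun w hw w' hw' =>
    (Submodule.mem_orthogonal M w').mp (hW'Mo hw') w (hWM hw)
  have hW'W : ∀ w' ∈ W', ∀ w ∈ W, ⟪w', w⟫ = 0 := fun w' hw' w hw =>
    inner_eq_zero_symm.mp (hWW' w hw w' hw')
  -- E is orthogonal to both W and W'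
  have hEW : ∀ e ∈ E, ∀ w ∈ W, ⟪e, w⟫ = 0 := fun e he w hw => by
    have : w ∈ Eᗮ := (inf_le_left : Eᗮ ⊓ M ≤ Eᗮ) hw
    exact (Submodule.mem_orthogonal E w).mp this e he
  have hEW' : ∀ e ∈ E, ∀ w' ∈ W', ⟪e, w'⟫ = 0 := fun e he w' hw' =>
    (Submodule.mem_orthogonal M w').mp (hW'Mo hw') e he.1
  -- W is orthogonal to all of L
  have hWL : ∀ w ∈ W, ∀ x ∈ L, ⟪w, x⟫ = 0 := by
    intro w hw x hx
    have hPKw : ((Submodule.orthogonalProjectionOnto L w : ↥L) : K) ∈ E :=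
      ⟨hPM w (hWM hw), (Submodule.orthogonalProjectionOnto L w).2⟩
    have hwEo : w ∈ Eᗮ := (inf_le_left : Eᗮ ⊓ M ≤ Eᗮ) hw
    have h0 : ⟪((Submodule.orthogonalProjectionOnto L w : ↥L) : K), w⟫ = 0 :=
      (Submodule.mem_orthogonal E w).mp hwEo _ hPKw
    have hPKw0 : ((Submodule.orthogonalProjectionOnto L w : ↥L) : K) = 0 := by
      have hsub : w - ((Submodule.orthogonalProjectionOnto L w : ↥L) : K) ∈ Lᗮ :=
        Submodule.sub_starProjection_mem_orthogonal w
      have h1 : (⟪((Submodule.orthogonalProjectionOnto L w : ↥L) : K),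
          w - ((Submodule.orthogonalProjectionOnto L w : ↥L) : K)⟫ : ℂ) = 0 :=
        (Submodule.mem_orthogonal L _).mp hsub _ (Submodule.orthogonalProjectionOnto L w).2
      rw [inner_sub_right, h0, zero_sub, neg_eq_zero] at h1
      exact inner_self_eq_zero.mp h1
    have hx' : ((Submodule.orthogonalProjectionOnto L x : ↥L) : K) = x := Submodule.starProjection_eq_self_iff.mpr hx
    calc ⟪w, x⟫ = ⟪w, ((Submodule.orthogonalProjectionOnto L x : ↥L) : K)⟫ := by rw [hx']
      _ = ⟪((Submodule.orthogonalProjectionOnto L w : ↥L) : K), x⟫ := by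
          exact (Submodule.inner_starProjection_left_eq_right L w x).symm
      _ = 0 := by rw [hPKw0, inner_zero_left]
  haveI : CompleteSpace ↥W := FiniteDimensional.complete ℂ ↥W
  haveI : CompleteSpace ↥W' := FiniteDimensional.complete ℂ ↥W'
  set PW := Submodule.orthogonalProjectionOnto W with hPWdef
  set PW' := Submodule.orthogonalProjectionOnto W' with hPW'def
  set fC : ↥W →L[ℂ] ↥W' := f.toLinearIsometry.toContinuousLinearMap with hfCdef
  set fC' : ↥W' →L[ℂ] ↥W := f.symm.toLinearIsometry.toContinuousLinearMap with hfC'def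
  set u : K →L[ℂ] K :=
    ContinuousLinearMap.id ℂ K - W.subtypeL.comp PW - W'.subtypeL.comp PW'
      + W'.subtypeL.comp (fC.comp PW) + W.subtypeL.comp (fC'.comp PW') with hudef
  have hux : ∀ x : K, u x = x - (PW x : K) - (PW' x : K) + ((f (PW x) : ↥W') : K)
      + ((f.symm (PW' x) : ↥W) : K) := by
    intro x
    simp [hudef, ContinuousLinearMap.sub_apply, ContinuousLinearMap.add_apply,
      ContinuousLinearMap.comp_apply, hfCdef, hfC'def]
  -- the "z" part is orthogonal to W and W'
  have hz : ∀ x : K, x - (PW x : K) - (PW' x : K) ∈ Wᗮ ∧ x - (PW x : K) - (PW' x : K) ∈ W'ᗮ := by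
    intro x
    constructor
    · have h1 : x - (PW x : K) ∈ Wᗮ := Submodule.sub_starProjection_mem_orthogonal x
      have h2 : (PW' x : K) ∈ Wᗮ := by
        rw [Submodule.mem_orthogonal]
        intro w hw
        exact hWW' w hw _ (PW' x).2
      have := Submodule.sub_mem Wᗮ h1 h2
      simpa [sub_sub] using this
    · have h1 : x - (PW' x : K) ∈ W'ᗮ := Submodule.sub_starProjection_mem_orthogonal x
      have h2 : (PW x : K) ∈ W'ᗮ := by
        rw [Submodule.mem_orthogonal]
        intro w' hw'
        exact hW'W w' hw' _ (PW x).2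
      have := Submodule.sub_mem W'ᗮ h1 h2
      have heq : x - (PW' x : K) - (PW x : K) = x - (PW x : K) - (PW' x : K) := by abel
      rwa [heq] at this
  have horthW : ∀ (p q : K), p ∈ Wᗮ → q ∈ W → ⟪p, q⟫ = 0 ∧ ⟪q, p⟫ = 0 := by
    intro p q hp hq
    have h := (Submodule.mem_orthogonal W p).mp hp q hq
    exact ⟨inner_eq_zero_symm.mp h, h⟩
  have horthW' : ∀ (p q : K), p ∈ W'ᗮ → q ∈ W' → ⟪p, q⟫ = 0 ∧ ⟪q, p⟫ = 0 := by
    intro p q hp hq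
    have h := (Submodule.mem_orthogonal W' p).mp hp q hq
    exact ⟨inner_eq_zero_symm.mp h, h⟩
  have hinner : ∀ x y : K, ⟪u x, u y⟫ = ⟪x, y⟫ := by
    intro x y
    rw [hux x, hux y]
    have hxz := hz x
    have hyz := hz y
    set zx := x - (PW x : K) - (PW' x : K)
    set zy := y - (PW y : K) - (PW' y : K)
    have e1 : ⟪zx + ((f (PW x) : ↥W') : K) + ((f.symm (PW' x) : ↥W) : K),
        zy + ((f (PW y) : ↥W') : K) + ((f.symm (PW' y) : ↥W) : K)⟫
        = ⟪zx, zy⟫ + ⟪((f (PW x) : ↥W') : K), ((f (PW y) : ↥W') : K)⟫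
          + ⟪((f.symm (PW' x) : ↥W) : K), ((f.symm (PW' y) : ↥W) : K)⟫ := by
      apply aux_inner_expand
      · exact (horthW' zx _ hxz.2 (f (PW y)).2).1
      · exact (horthW zx _ hxz.1 (f.symm (PW' y)).2).1
      · exact (horthW' zy _ hyz.2 (f (PW x)).2).2
      · exact hW'W _ (f (PW x)).2 _ (f.symm (PW' y)).2
      · exact (horthW zy _ hyz.1 (f.symm (PW' x)).2).2
      · exact hWW' _ (f.symm (PW' x)).2 _ (f (PW y)).2
    have e2 : ⟪x, y⟫ = ⟪zx, zy⟫ + ⟪((PW x : K)), ((PW y : K))⟫ + ⟪((PW' x : K)), ((PW' y : K))⟫ := by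
      have hx' : x = zx + (PW x : K) + (PW' x : K) := by simp only [zx]; abel
      have hy' : y = zy + (PW y : K) + (PW' y : K) := by simp only [zy]; abel
      conv_lhs => rw [hx', hy']
      apply aux_inner_expand
      · exact (horthW zx _ hxz.1 (PW y).2).1
      · exact (horthW' zx _ hxz.2 (PW' y).2).1
      · exact (horthW zy _ hyz.1 (PW x).2).2
      · exact hWW' _ (PW x).2 _ (PW' y).2
      · exact (horthW' zy _ hyz.2 (PW' x).2).2
      · exact hW'W _ (PW' x).2 _ (PW y).2
    have e3 : ⟪((f (PW x) : ↥W') : K), ((f (PW y) : ↥W') : K)⟫ = ⟪((PW x : K)), ((PW y : K))⟫ := by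
      rw [← Submodule.coe_inner, f.inner_map_map, Submodule.coe_inner]
    have e4 : ⟪((f.symm (PW' x) : ↥W) : K), ((f.symm (PW' y) : ↥W) : K)⟫
        = ⟪((PW' x : K)), ((PW' y : K))⟫ := by
      rw [← Submodule.coe_inner, f.symm.inner_map_map, Submodule.coe_inner]
    rw [e1, e3, e4, e2]
  refine ⟨u, hinner, ?_, ?_, ?_⟩
  · -- u maps M into L
    intro v hv
    have hsup : E ⊔ (Eᗮ ⊓ M) = M := Submodule.sup_orthogonal_inf_of_hasOrthogonalProjection inf_le_left
    have hvmem : v ∈ E ⊔ W := by rw [hWdef, hsup]; exact hv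
    obtain ⟨e, he, w, hw, rfl⟩ := Submodule.mem_sup.mp hvmem
    have hePW : PW e = 0 := by
      apply Submodule.orthogonalProjectionOnto_apply_of_mem_orthogonal
      rw [Submodule.mem_orthogonal]
      intro w₀ hw₀
      exact inner_eq_zero_symm.mp (hEW e he w₀ hw₀)
    have hePW' : PW' e = 0 := by
      apply Submodule.orthogonalProjectionOnto_apply_of_mem_orthogonal
      rw [Submodule.mem_orthogonal]
      intro w₀ hw₀
      exact inner_eq_zero_symm.mp (hEW' e he w₀ hw₀)
    have hwPW : PW w = ⟨w, hw⟩ := Submodule.orthogonalProjectionOnto_mem_subspace_eq_self ⟨w, hw⟩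
    have hwPW' : PW' w = 0 := by
      apply Submodule.orthogonalProjectionOnto_apply_of_mem_orthogonal
      rw [Submodule.mem_orthogonal]
      intro w₀ hw₀
      exact inner_eq_zero_symm.mp (hWW' w hw w₀ hw₀)
    have : u (e + w) = e + ((f ⟨w, hw⟩ : ↥W') : K) := by
      rw [hux]
      simp [map_add, hePW, hePW', hwPW, hwPW']
    rw [this]
    exact Submodule.add_mem L he.2 (hW'L (f ⟨w, hw⟩).2)
  · -- the bound on M
    intro v hv
    have hPW'v : PW' v = 0 := by
      apply Submodule.orthogonalProjectionOnto_apply_of_mem_orthogonal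
      rw [Submodule.mem_orthogonal]
      intro w₀ hw₀
      exact inner_eq_zero_symm.mp
        ((Submodule.mem_orthogonal M w₀).mp (hW'Mo hw₀) v hv)
    have huv : u v - v = ((f (PW v) : ↥W') : K) - (PW v : K) := by
      rw [hux]
      simp [hPW'v]
      abel
    rw [huv]
    have h1 : ‖((f (PW v) : ↥W') : K) - (PW v : K)‖ ≤ ‖(PW v : K)‖ + ‖(PW v : K)‖ := by
      have hfn : ‖((f (PW v) : ↥W') : K)‖ = ‖(PW v : K)‖ := by
        rw [show ‖((f (PW v) : ↥W') : K)‖ = ‖f (PW v)‖ from rfl, f.norm_map]; rfl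
      calc ‖((f (PW v) : ↥W') : K) - (PW v : K)‖
          ≤ ‖((f (PW v) : ↥W') : K)‖ + ‖(PW v : K)‖ := norm_sub_le _ _
        _ = ‖(PW v : K)‖ + ‖(PW v : K)‖ := by rw [hfn]
    have hq : ((Submodule.orthogonalProjectionOnto L v : ↥L) : K) ∈ E :=
      ⟨hPM v hv, (Submodule.orthogonalProjectionOnto L v).2⟩
    have hPWq : PW ((Submodule.orthogonalProjectionOnto L v : ↥L) : K) = 0 := by
      apply Submodule.orthogonalProjectionOnto_apply_of_mem_orthogonal
      rw [Submodule.mem_orthogonal]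
      intro w₀ hw₀
      exact inner_eq_zero_symm.mp (hEW _ hq w₀ hw₀)
    have h2 : ‖(PW v : K)‖ ≤ ‖v - ((Submodule.orthogonalProjectionOnto L v : ↥L) : K)‖ := by
      have heq2 : PW v = PW (v - ((Submodule.orthogonalProjectionOnto L v : ↥L) : K)) := by
        rw [map_sub, hPWq, sub_zero]
      rw [heq2]
      calc ‖(PW (v - ((Submodule.orthogonalProjectionOnto L v : ↥L) : K)) : K)‖
          = ‖PW (v - ((Submodule.orthogonalProjectionOnto L v : ↥L) : K))‖ := rfl
        _ ≤ ‖PW‖ * ‖v - ((Submodule.orthogonalProjectionOnto L v : ↥L) : K)‖ :=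
            PW.le_opNorm _
        _ ≤ 1 * ‖v - ((Submodule.orthogonalProjectionOnto L v : ↥L) : K)‖ := by
            apply mul_le_mul_of_nonneg_right (Submodule.orthogonalProjectionOnto_norm_le W) (norm_nonneg _)
        _ = ‖v - ((Submodule.orthogonalProjectionOnto L v : ↥L) : K)‖ := one_mul _
    calc ‖((f (PW v) : ↥W') : K) - (PW v : K)‖ ≤ ‖(PW v : K)‖ + ‖(PW v : K)‖ := h1
      _ ≤ ‖v - ((Submodule.orthogonalProjectionOnto L v : ↥L) : K)‖
          + ‖v - ((Submodule.orthogonalProjectionOnto L v : ↥L) : K)‖ := add_le_add h2 h2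
      _ = 2 * ‖v - ((Submodule.orthogonalProjectionOnto L v : ↥L) : K)‖ := by ring
  · -- the bound on L
    intro x hx y hy
    have hPWx : PW x = 0 := by
      apply Submodule.orthogonalProjectionOnto_apply_of_mem_orthogonal
      rw [Submodule.mem_orthogonal]
      intro w₀ hw₀
      exact hWL w₀ hw₀ x hx
    have huv : u x - x = ((f.symm (PW' x) : ↥W) : K) - (PW' x : K) := by
      rw [hux]
      simp [hPWx]
      abel
    rw [huv]
    have h1 : ‖((f.symm (PW' x) : ↥W) : K) - (PW' x : K)‖ ≤ ‖(PW' x : K)‖ + ‖(PW' x : K)‖ := by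
      have hfn : ‖((f.symm (PW' x) : ↥W) : K)‖ = ‖(PW' x : K)‖ := by
        rw [show ‖((f.symm (PW' x) : ↥W) : K)‖ = ‖f.symm (PW' x)‖ from rfl, f.symm.norm_map]; rfl
      calc ‖((f.symm (PW' x) : ↥W) : K) - (PW' x : K)‖
          ≤ ‖((f.symm (PW' x) : ↥W) : K)‖ + ‖(PW' x : K)‖ := norm_sub_le _ _
        _ = ‖(PW' x : K)‖ + ‖(PW' x : K)‖ := by rw [hfn]
    -- PW' x = PW' (x₀ - y)
    have hxC : x - ((Submodule.orthogonalProjectionOnto C x : ↥C) : K) ∈ Cᗮ :=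
      Submodule.sub_starProjection_mem_orthogonal x
    have hW'res : PW' (x - ((Submodule.orthogonalProjectionOnto C x : ↥C) : K)) = 0 := by
      apply Submodule.orthogonalProjectionOnto_apply_of_mem_orthogonal
      rw [Submodule.mem_orthogonal]
      intro w₀ hw₀
      exact (Submodule.mem_orthogonal C _).mp hxC w₀ (hW'C hw₀)
    have hW'y : PW' y = 0 := by
      apply Submodule.orthogonalProjectionOnto_apply_of_mem_orthogonal
      rw [Submodule.mem_orthogonal]
      intro w₀ hw₀
      exact inner_eq_zero_symm.mp ((Submodule.mem_orthogonal G w₀).mp (hW'Go hw₀) y hy)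
    have h2 : PW' x = PW' (((Submodule.orthogonalProjectionOnto C x : ↥C) : K) - y) := by
      have e1 : PW' x = PW' ((Submodule.orthogonalProjectionOnto C x : ↥C) : K) := by
        have h4 := map_sub PW' x ((Submodule.orthogonalProjectionOnto C x : ↥C) : K)
        rw [hW'res] at h4
        exact sub_eq_zero.mp h4.symm
      rw [e1, map_sub, hW'y, sub_zero]
    have h3 : ‖(PW' x : K)‖ ≤ ‖((Submodule.orthogonalProjectionOnto C x : ↥C) : K) - y‖ := by
      rw [h2]
      calc ‖(PW' (((Submodule.orthogonalProjectionOnto C x : ↥C) : K) - y) : K)‖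
          = ‖PW' (((Submodule.orthogonalProjectionOnto C x : ↥C) : K) - y)‖ := rfl
        _ ≤ ‖PW'‖ * ‖((Submodule.orthogonalProjectionOnto C x : ↥C) : K) - y‖ := PW'.le_opNorm _
        _ ≤ 1 * ‖((Submodule.orthogonalProjectionOnto C x : ↥C) : K) - y‖ := by
            apply mul_le_mul_of_nonneg_right (Submodule.orthogonalProjectionOnto_norm_le W') (norm_nonneg _)
        _ = ‖((Submodule.orthogonalProjectionOnto C x : ↥C) : K) - y‖ := one_mul _
    calc ‖((f.symm (PW' x) : ↥W) : K) - (PW' x : K)‖ ≤ ‖(PW' x : K)‖ + ‖(PW' x : K)‖ := h1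
      _ ≤ ‖((Submodule.orthogonalProjectionOnto C x : ↥C) : K) - y‖
          + ‖((Submodule.orthogonalProjectionOnto C x : ↥C) : K) - y‖ := add_le_add h3 h3
      _ = 2 * ‖((Submodule.orthogonalProjectionOnto C x : ↥C) : K) - y‖ := by ring

end Swap

section PerIndex

lemma aux_dist_le {K : Type*} [NormedAddCommGroup K] [InnerProductSpace ℂ K]
    (L : Submodule ℂ K) [CompleteSpace ↥L] (w y : K) (hy : y ∈ L) :
    ‖w - ((Submodule.orthogonalProjectionOnto L w : ↥L) : K)‖ ≤ ‖w - y‖ := by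
  rw [← Submodule.starProjection_apply, Submodule.starProjection_minimal]
  have hbdd : BddBelow (Set.range fun x : ↥L => ‖w - (x : K)‖) := by
    refine ⟨0, ?_⟩
    rintro r ⟨x, rfl⟩
    exact norm_nonneg _
  exact ciInf_le hbdd ⟨y, hy⟩

lemma per_index {H₀ : Type*} [NormedAddCommGroup H₀] [InnerProductSpace ℂ H₀] [CompleteSpace H₀]
    {K : Type*} [NormedAddCommGroup K] [InnerProductSpace ℂ K] [CompleteSpace K]
    (A : NonUnitalSubalgebra ℂ (H₀ →L[ℂ] H₀))
    (π : ↥A → (K →L[ℂ] K))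
    (L : Submodule ℂ K) [CompleteSpace ↥L]
    (hred : ∀ a : ↥A, ∀ x ∈ L, π a x ∈ L ∧ ContinuousLinearMap.adjoint (π a) x ∈ L)
    (C : Submodule ℂ K) [CompleteSpace ↥C]
    (hinf : ¬ FiniteDimensional ℂ ↥(L ⊓ C))
    (ρ : ↥A → (K →L[ℂ] K))
    (hmul : ∀ a b : ↥A, ρ (a * b) = ρ a * ρ b)
    (hadd : ∀ a b : ↥A, ρ (a + b) = ρ a + ρ b)
    (hsmul : ∀ (c : ℂ) (a : ↥A), ρ (c • a) = c • ρ a)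
    (hcontr : ∀ a : ↥A, ‖ρ a‖ ≤ ‖(a : H₀ →L[ℂ] H₀)‖)
    (Y : Submodule ℂ K) (hYfd : FiniteDimensional ℂ ↥Y)
    (hY : ∀ a : ↥A, LinearMap.range ((ρ a : K →ₗ[ℂ] K)) ≤ Y ∧
      LinearMap.range ((ContinuousLinearMap.adjoint (ρ a) : K →ₗ[ℂ] K)) ≤ Y)
    (G : Submodule ℂ K) (hGfd : FiniteDimensional ℂ ↥G) :
    ∃ σ : ↥A → (↥L →L[ℂ] ↥L),
      (∀ a b : ↥A, σ (a * b) = σ a * σ b) ∧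
      (∀ a b : ↥A, σ (a + b) = σ a + σ b) ∧
      (∀ (c : ℂ) (a : ↥A), σ (c • a) = c • σ a) ∧
      (∀ a : ↥A, ‖σ a‖ ≤ ‖(a : H₀ →L[ℂ] H₀)‖) ∧
      (∃ Z : Submodule ℂ ↥L, FiniteDimensional ℂ Z ∧ ∀ a : ↥A,
        LinearMap.range ((σ a : ↥L →ₗ[ℂ] ↥L)) ≤ Z ∧
          LinearMap.range ((ContinuousLinearMap.adjoint (σ a) : ↥L →ₗ[ℂ] ↥L)) ≤ Z) ∧
      (∀ (a : ↥A) (x : ↥L), ∀ y ∈ G,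
        ‖((σ a x : ↥L) : K) - π a (x : K)‖
          ≤ 2 * ‖(a : H₀ →L[ℂ] H₀)‖ * ‖((Submodule.orthogonalProjectionOnto C (x : K) : ↥C) : K) - y‖
            + 3 * ‖ρ a (x : K) - π a (x : K)‖ ∧
        ‖((ContinuousLinearMap.adjoint (σ a) x : ↥L) : K)
            - ContinuousLinearMap.adjoint (π a) (x : K)‖
          ≤ 2 * ‖(a : H₀ →L[ℂ] H₀)‖ * ‖((Submodule.orthogonalProjectionOnto C (x : K) : ↥C) : K) - y‖
            + 3 * ‖ContinuousLinearMap.adjoint (ρ a) (x : K)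
                - ContinuousLinearMap.adjoint (π a) (x : K)‖) := by
  classical
  haveI := hYfd
  haveI := hGfd
  set PK : K →L[ℂ] K := L.subtypeL.comp (Submodule.orthogonalProjectionOnto L) with hPKdef
  have hPKapp : ∀ v : K, PK v = ((Submodule.orthogonalProjectionOnto L v : ↥L) : K) := fun v => rfl
  have hPKmem : ∀ v : K, PK v ∈ L := fun v => (Submodule.orthogonalProjectionOnto L v).2
  have hPKfix : ∀ v ∈ L, PK v = v := by
    intro v hv
    rw [hPKapp, ← Submodule.starProjection_apply, Submodule.starProjection_eq_self_iff]
    exact hv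
  set M : Submodule ℂ K := Y ⊔ Submodule.map (PK : K →ₗ[ℂ] K) Y with hMdef
  haveI : FiniteDimensional ℂ ↥M := by
    apply Submodule.finiteDimensional_sup
  have hYM : Y ≤ M := le_sup_left
  have hM_PK : ∀ v ∈ M, ((Submodule.orthogonalProjectionOnto L v : ↥L) : K) ∈ M := by
    intro v hv
    rw [← hPKapp]
    obtain ⟨y, hy, z, hz, rfl⟩ := Submodule.mem_sup.mp hv
    obtain ⟨y', hy', rfl⟩ := hz
    have h1 : PK (y + (PK : K →ₗ[ℂ] K) y') = PK (y + y') := by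
      simp only [ContinuousLinearMap.coe_coe]
      rw [map_add, map_add, hPKfix (PK y') (hPKmem y')]
    rw [h1]
    refine (le_sup_right : Submodule.map (PK : K →ₗ[ℂ] K) Y ≤ M)
      ⟨y + y', Submodule.add_mem _ hy hy', ?_⟩
    simp only [ContinuousLinearMap.coe_coe]
  obtain ⟨u, hu_inner, hu_maps, hu_bound, hu_Lbound⟩ := swap_isometry L C hinf M hM_PK G
  set ua : K →L[ℂ] K := ContinuousLinearMap.adjoint u with huadef
  have hu_adj : ∀ x : K, ua (u x) = x := by
    intro x
    apply ext_inner_left ℂ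
    intro v
    rw [huadef, ContinuousLinearMap.adjoint_inner_right]
    exact hu_inner v x
  have hu_norm : ∀ x : K, ‖u x‖ = ‖x‖ := by
    intro x
    rw [norm_eq_sqrt_re_inner (𝕜 := ℂ) (u x), norm_eq_sqrt_re_inner (𝕜 := ℂ) x, hu_inner]
  have hu_op : ‖u‖ ≤ 1 := by
    apply ContinuousLinearMap.opNorm_le_bound _ zero_le_one
    intro x
    rw [hu_norm, one_mul]
  have hua_op : ‖ua‖ ≤ 1 := by
    rw [huadef]
    calc ‖ContinuousLinearMap.adjoint u‖ = ‖u‖ :=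
          (ContinuousLinearMap.adjoint : (K →L[ℂ] K) ≃ₗᵢ⋆[ℂ] (K →L[ℂ] K)).norm_map u
      _ ≤ 1 := hu_op
  set σ : ↥A → (↥L →L[ℂ] ↥L) := fun a =>
    (Submodule.orthogonalProjectionOnto L).comp (u.comp ((ρ a).comp (ua.comp L.subtypeL))) with hσdef
  have hσapp : ∀ (a : ↥A) (x : ↥L),
      σ a x = Submodule.orthogonalProjectionOnto L (u (ρ a (ua (x : K)))) := fun a x => rfl
  have hmemY : ∀ (a : ↥A) (z : K), ρ a z ∈ M := fun a z => hYM ((hY a).1 ⟨z, rfl⟩)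
  have hmemY' : ∀ (a : ↥A) (z : K), ContinuousLinearMap.adjoint (ρ a) z ∈ M :=
    fun a z => hYM ((hY a).2 ⟨z, rfl⟩)
  have huL : ∀ (a : ↥A) (z : K), u (ρ a z) ∈ L := fun a z => hu_maps _ (hmemY a z)
  have hcoePL : ∀ z ∈ L, ((Submodule.orthogonalProjectionOnto L z : ↥L) : K) = z := fun z hz =>
    Submodule.starProjection_eq_self_iff.mpr hz
  have hσadj : ∀ a : ↥A, ContinuousLinearMap.adjoint (σ a) = (Submodule.orthogonalProjectionOnto L).comp
      (u.comp ((ContinuousLinearMap.adjoint (ρ a)).comp (ua.comp L.subtypeL))) := by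
    intro a
    have : σ a = (Submodule.orthogonalProjectionOnto L).comp (u.comp ((ρ a).comp (ua.comp L.subtypeL))) := rfl
    rw [this, ContinuousLinearMap.adjoint_comp, ContinuousLinearMap.adjoint_comp,
      ContinuousLinearMap.adjoint_comp, ContinuousLinearMap.adjoint_comp, huadef,
      ContinuousLinearMap.adjoint_adjoint, Submodule.adjoint_subtypeL,
      Submodule.adjoint_orthogonalProjection]
    ext x
    rfl
  refine ⟨σ, ?_, ?_, ?_, ?_, ?_, ?_⟩
  · -- multiplicative
    intro a b
    ext x
    show ((σ (a * b) x : ↥L) : K) = ((σ a (σ b x) : ↥L) : K)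
    have h1 : ((σ b x : ↥L) : K) = u (ρ b (ua (x : K))) := hcoePL _ (huL b _)
    rw [hσapp, hσapp, h1, hu_adj, hmul]
    rfl
  · -- additive
    intro a b
    ext x
    show ((σ (a + b) x : ↥L) : K) = ((σ a x + σ b x : ↥L) : K)
    rw [hσapp, hadd]
    simp [ContinuousLinearMap.add_apply, map_add, hσapp]
  · -- smul
    intro c a
    ext x
    show ((σ (c • a) x : ↥L) : K) = ((c • σ a x : ↥L) : K)
    rw [hσapp, hsmul]
    simp [ContinuousLinearMap.smul_apply, map_smul, hσapp]
  · -- contraction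
    intro a
    apply ContinuousLinearMap.opNorm_le_bound _ (norm_nonneg _)
    intro x
    have e1 : ‖Submodule.orthogonalProjectionOnto L (u (ρ a (ua (x : K))))‖ ≤ ‖u (ρ a (ua (x : K)))‖ := by
      calc ‖Submodule.orthogonalProjectionOnto L (u (ρ a (ua (x : K))))‖
          ≤ ‖Submodule.orthogonalProjectionOnto L‖ * ‖u (ρ a (ua (x : K)))‖ :=
            (Submodule.orthogonalProjectionOnto L).le_opNorm _
        _ ≤ 1 * ‖u (ρ a (ua (x : K)))‖ :=
            mul_le_mul_of_nonneg_right (Submodule.orthogonalProjectionOnto_norm_le L) (norm_nonneg _)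
        _ = ‖u (ρ a (ua (x : K)))‖ := one_mul _
    have e2 : ‖ua (x : K)‖ ≤ ‖x‖ := by
      calc ‖ua (x : K)‖ ≤ ‖ua‖ * ‖(x : K)‖ := ua.le_opNorm _
        _ ≤ 1 * ‖(x : K)‖ := mul_le_mul_of_nonneg_right hua_op (norm_nonneg _)
        _ = ‖x‖ := one_mul _
    calc ‖σ a x‖ ≤ ‖u (ρ a (ua (x : K)))‖ := e1
      _ = ‖ρ a (ua (x : K))‖ := hu_norm _
      _ ≤ ‖ρ a‖ * ‖ua (x : K)‖ := (ρ a).le_opNorm _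
      _ ≤ ‖(a : H₀ →L[ℂ] H₀)‖ * ‖x‖ :=
          mul_le_mul (hcontr a) e2 (norm_nonneg _) (norm_nonneg _)
  · -- ranges
    set N : Submodule ℂ K := Submodule.map (u : K →ₗ[ℂ] K) M with hNdef
    have hNL : N ≤ L := by
      rintro z ⟨v, hv, rfl⟩
      simpa using hu_maps v hv
    haveI : FiniteDimensional ℂ ↥N := inferInstance
    refine ⟨Submodule.comap L.subtype N, ?_, ?_⟩
    · exact (Submodule.comapSubtypeEquivOfLe hNL).symm.finiteDimensional
    · intro a
      have key : ∀ (w : K), w ∈ M → Submodule.orthogonalProjectionOnto L (u w) ∈ Submodule.comap L.subtype N := by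
        intro w hw
        have huw : u w ∈ N := ⟨w, hw, rfl⟩
        have huwL : u w ∈ L := hu_maps w hw
        rw [Submodule.mem_comap]
        have : (L.subtype (Submodule.orthogonalProjectionOnto L (u w)) : K) = u w := hcoePL _ huwL
        rw [this]
        exact huw
      constructor
      · rintro z ⟨x, rfl⟩
        exact key _ (hmemY a _)
      · rintro z ⟨x, rfl⟩
        have : ContinuousLinearMap.adjoint (σ a) x
            = Submodule.orthogonalProjectionOnto L (u (ContinuousLinearMap.adjoint (ρ a) (ua (x : K)))) := by
          rw [hσadj a]; rfl
        rw [ContinuousLinearMap.coe_coe, this]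
        exact key _ (hmemY' a _)
  · -- quantitative bounds
    intro a x y hy
    have hxL : (x : K) ∈ L := x.2
    have huax : ‖ua (x : K) - (x : K)‖ ≤ 2 * ‖((Submodule.orthogonalProjectionOnto C (x : K) : ↥C) : K) - y‖ := by
      have e : ua (x : K) - (x : K) = ua ((x : K) - u (x : K)) := by
        rw [map_sub, hu_adj]
      rw [e]
      calc ‖ua ((x : K) - u (x : K))‖ ≤ ‖ua‖ * ‖(x : K) - u (x : K)‖ := ua.le_opNorm _
        _ ≤ 1 * ‖(x : K) - u (x : K)‖ := mul_le_mul_of_nonneg_right hua_op (norm_nonneg _)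
        _ = ‖u (x : K) - (x : K)‖ := by rw [one_mul, norm_sub_rev]
        _ ≤ 2 * ‖((Submodule.orthogonalProjectionOnto C (x : K) : ↥C) : K) - y‖ := hu_Lbound _ hxL y hy
    have key : ∀ (g : K →L[ℂ] K) (p : K), (∀ z : K, g z ∈ M) → ‖g‖ ≤ ‖(a : H₀ →L[ℂ] H₀)‖ →
        p ∈ L →
        ‖((Submodule.orthogonalProjectionOnto L (u (g (ua (x : K)))) : ↥L) : K) - p‖
          ≤ 2 * ‖(a : H₀ →L[ℂ] H₀)‖ * ‖((Submodule.orthogonalProjectionOnto C (x : K) : ↥C) : K) - y‖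
            + 3 * ‖g (x : K) - p‖ := by
      intro g p hgM hgn hpL
      have hstep : ‖((Submodule.orthogonalProjectionOnto L (u (g (ua (x : K)))) : ↥L) : K) - p‖
          ≤ ‖u (g (ua (x : K))) - p‖ := by
        conv_lhs => rw [← hcoePL p hpL]
        rw [← Submodule.coe_sub, ← map_sub]
        calc ‖(Submodule.orthogonalProjectionOnto L (u (g (ua (x : K))) - p) : K)‖
            = ‖Submodule.orthogonalProjectionOnto L (u (g (ua (x : K))) - p)‖ := rfl
          _ ≤ ‖Submodule.orthogonalProjectionOnto L‖ * ‖u (g (ua (x : K))) - p‖ :=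
              (Submodule.orthogonalProjectionOnto L).le_opNorm _
          _ ≤ 1 * ‖u (g (ua (x : K))) - p‖ :=
              mul_le_mul_of_nonneg_right (Submodule.orthogonalProjectionOnto_norm_le L) (norm_nonneg _)
          _ = ‖u (g (ua (x : K))) - p‖ := one_mul _
      have hB1 : ‖u (g (ua (x : K))) - u (g (x : K))‖
          ≤ 2 * ‖(a : H₀ →L[ℂ] H₀)‖ * ‖((Submodule.orthogonalProjectionOnto C (x : K) : ↥C) : K) - y‖ := by
        rw [← map_sub u, hu_norm, ← map_sub g]
        calc ‖g (ua (x : K) - (x : K))‖ ≤ ‖g‖ * ‖ua (x : K) - (x : K)‖ := g.le_opNorm _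
          _ ≤ ‖(a : H₀ →L[ℂ] H₀)‖ * (2 * ‖((Submodule.orthogonalProjectionOnto C (x : K) : ↥C) : K) - y‖) :=
              mul_le_mul hgn huax (norm_nonneg _) ((norm_nonneg _).trans hgn)
          _ = 2 * ‖(a : H₀ →L[ℂ] H₀)‖ * ‖((Submodule.orthogonalProjectionOnto C (x : K) : ↥C) : K) - y‖ := by
              ring
      have hB2 : ‖u (g (x : K)) - g (x : K)‖ ≤ 2 * ‖g (x : K) - p‖ := by
        calc ‖u (g (x : K)) - g (x : K)‖
            ≤ 2 * ‖g (x : K) - ((Submodule.orthogonalProjectionOnto L (g (x : K)) : ↥L) : K)‖ :=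
              hu_bound _ (hgM _)
          _ ≤ 2 * ‖g (x : K) - p‖ := by
              apply mul_le_mul_of_nonneg_left (aux_dist_le L _ p hpL) (by norm_num)
      have htri : ‖u (g (ua (x : K))) - p‖ ≤ ‖u (g (ua (x : K))) - u (g (x : K))‖
          + ‖u (g (x : K)) - g (x : K)‖ + ‖g (x : K) - p‖ := by
        have t1 := norm_add_le (u (g (ua (x : K))) - u (g (x : K)))
          (u (g (x : K)) - g (x : K))
        have t2 := norm_add_le (u (g (ua (x : K))) - g (x : K)) (g (x : K) - p)
        rw [sub_add_sub_cancel] at t1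
        rw [sub_add_sub_cancel] at t2
        calc ‖u (g (ua (x : K))) - p‖ ≤ ‖u (g (ua (x : K))) - g (x : K)‖ + ‖g (x : K) - p‖ := t2
          _ ≤ ‖u (g (ua (x : K))) - u (g (x : K))‖ + ‖u (g (x : K)) - g (x : K)‖
              + ‖g (x : K) - p‖ := by linarith
      calc ‖((Submodule.orthogonalProjectionOnto L (u (g (ua (x : K)))) : ↥L) : K) - p‖
          ≤ ‖u (g (ua (x : K))) - p‖ := hstep
        _ ≤ ‖u (g (ua (x : K))) - u (g (x : K))‖ + ‖u (g (x : K)) - g (x : K)‖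
            + ‖g (x : K) - p‖ := htri
        _ ≤ 2 * ‖(a : H₀ →L[ℂ] H₀)‖ * ‖((Submodule.orthogonalProjectionOnto C (x : K) : ↥C) : K) - y‖
            + 2 * ‖g (x : K) - p‖ + ‖g (x : K) - p‖ := by
              exact add_le_add (add_le_add hB1 hB2) le_rfl
        _ = 2 * ‖(a : H₀ →L[ℂ] H₀)‖ * ‖((Submodule.orthogonalProjectionOnto C (x : K) : ↥C) : K) - y‖
            + 3 * ‖g (x : K) - p‖ := by ring
    constructor
    · exact key (ρ a) (π a (x : K)) (hmemY a) (hcontr a) (hred a (x : K) hxL).1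
    · have h0 : ((ContinuousLinearMap.adjoint (σ a) x : ↥L) : K)
          = ((Submodule.orthogonalProjectionOnto L (u (ContinuousLinearMap.adjoint (ρ a) (ua (x : K)))) : ↥L) : K) := by
        rw [hσadj a]; rfl
      rw [h0]
      have hadjn : ‖ContinuousLinearMap.adjoint (ρ a)‖ ≤ ‖(a : H₀ →L[ℂ] H₀)‖ := by
        calc ‖ContinuousLinearMap.adjoint (ρ a)‖ = ‖ρ a‖ :=
              (ContinuousLinearMap.adjoint : (K →L[ℂ] K) ≃ₗᵢ⋆[ℂ] (K →L[ℂ] K)).norm_map (ρ a)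
          _ ≤ ‖(a : H₀ →L[ℂ] H₀)‖ := hcontr a
      exact key (ContinuousLinearMap.adjoint (ρ a)) (ContinuousLinearMap.adjoint (π a) (x : K))
        (hmemY' a) hadjn (hred a (x : K) hxL).2

end PerIndex

section Main

lemma aux_tendsto {K : Type*} [NormedAddCommGroup K] [NormedSpace ℂ K]
    {ι₀ T : Type*} (l : Filter ι₀) [l.NeBot]
    (sel : ι₀ × Finset T → K) (q : ι₀ → K) (tgt : K) (c : ℝ) (hc : 0 ≤ c)
    (v : T → K) (x₀ : K)
    (happ : ∀ ζ : ℝ, 0 < ζ → ∃ (F₀ : Finset T) (w : K),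
      w ∈ Submodule.span ℂ (v '' ↑F₀) ∧ ‖x₀ - w‖ < ζ)
    (hq : Tendsto q l (nhds tgt))
    (hbd : ∀ j : ι₀ × Finset T, ∀ y ∈ Submodule.span ℂ (v '' ↑j.2),
      ‖sel j - tgt‖ ≤ 2 * c * ‖x₀ - y‖ + 3 * ‖q j.1 - tgt‖) :
    Tendsto sel (l ×ˢ atTop) (nhds tgt) := by
  classical
  rw [Metric.tendsto_nhds]
  intro ε hε
  obtain ⟨F₀, w, hw, hwn⟩ := happ (ε / (4 * (c + 1))) (by positivity)
  have h1 : ∀ᶠ i in l, ‖q i - tgt‖ < ε / 8 := by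
    have := hq.eventually (Metric.ball_mem_nhds tgt (by positivity : (0:ℝ) < ε / 8))
    filter_upwards [this] with i hi
    simpa [Metric.mem_ball, dist_eq_norm] using hi
  have h2 : {F : Finset T | F₀ ≤ F} ∈ (atTop : Filter (Finset T)) := mem_atTop F₀
  filter_upwards [Filter.prod_mem_prod h1 h2] with j hj
  obtain ⟨hj1, hj2⟩ := hj
  have hwj : w ∈ Submodule.span ℂ (v '' ↑j.2) := by
    apply Submodule.span_mono _ hw
    exact Set.image_mono hj2
  have hb := hbd j w hwj
  rw [dist_eq_norm]
  have hq1 : ‖q j.1 - tgt‖ < ε / 8 := hj1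
  have hcc : 2 * c * ‖x₀ - w‖ ≤ 2 * c * (ε / (4 * (c + 1))) := by
    apply mul_le_mul_of_nonneg_left hwn.le (by positivity)
  have hcc2 : 2 * c * (ε / (4 * (c + 1))) ≤ ε / 2 := by
    have hrat : c / (c + 1) ≤ 1 := by
      apply div_le_one_of_le₀ (by linarith) (by positivity)
    have heq : 2 * c * (ε / (4 * (c + 1))) = c / (c + 1) * (ε / 2) := by
      field_simp
      ring
    rw [heq]
    calc c / (c + 1) * (ε / 2) ≤ 1 * (ε / 2) :=
          mul_le_mul_of_nonneg_right hrat (by positivity)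
      _ = ε / 2 := one_mul _
  calc ‖sel j - tgt‖ ≤ 2 * c * ‖x₀ - w‖ + 3 * ‖q j.1 - tgt‖ := hb
    _ ≤ ε / 2 + 3 * (ε / 8) := add_le_add (hcc.trans hcc2) (by linarith)
    _ < ε := by linarith

end Main

/-- Let `A ⊆ B(H)` be an operator algebra and `π : A → B(K)` a representation
admitting an Exel–Loring approximation: a net of representations `π_λ` whose
essential spaces `C*(π_λ(A))K` are finite-dimensional, with `π_λ(a) → π(a)` and
`π_λ(a)⋆ → π(a)⋆` strongly.  If `L ⊆ K` is a closed subspace reducing for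
`π(A)` (and infinite-dimensional), then the restricted representation
`a ↦ π(a)|_L` also admits an Exel–Loring approximation acting on `L`. -/
theorem exelLoring_approx_restricts_to_reducing_subspace
    {H₀ : Type*} [NormedAddCommGroup H₀] [InnerProductSpace ℂ H₀] [CompleteSpace H₀]
    {K : Type*} [NormedAddCommGroup K] [InnerProductSpace ℂ K] [CompleteSpace K]
    (A : NonUnitalSubalgebra ℂ (H₀ →L[ℂ] H₀))
    (π : ↥A → (K →L[ℂ] K))
    (hπmul : ∀ a b : ↥A, π (a * b) = π a * π b)
    (hπadd : ∀ a b : ↥A, π (a + b) = π a + π b)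
    (hπsmul : ∀ (c : ℂ) (a : ↥A), π (c • a) = c • π a)
    (hπcontr : ∀ a : ↥A, ‖π a‖ ≤ ‖(a : H₀ →L[ℂ] H₀)‖)
    (hEL : ∃ (ι : Type) (l : Filter ι), l.NeBot ∧
      ∃ πs : ι → ↥A → (K →L[ℂ] K),
        (∀ i, ∀ a b : ↥A, πs i (a * b) = πs i a * πs i b) ∧
        (∀ i, ∀ a b : ↥A, πs i (a + b) = πs i a + πs i b) ∧
        (∀ i, ∀ (c : ℂ) (a : ↥A), πs i (c • a) = c • πs i a) ∧
        (∀ i, ∀ a : ↥A, ‖πs i a‖ ≤ ‖(a : H₀ →L[ℂ] H₀)‖) ∧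
        (∀ i, ∃ Y : Submodule ℂ K, FiniteDimensional ℂ Y ∧
          ∀ a : ↥A, LinearMap.range ((πs i a : K →ₗ[ℂ] K)) ≤ Y ∧
            LinearMap.range ((ContinuousLinearMap.adjoint (πs i a) : K →ₗ[ℂ] K)) ≤ Y) ∧
        (∀ (a : ↥A) (x : K), Tendsto (fun i => πs i a x) l (nhds (π a x))) ∧
        (∀ (a : ↥A) (x : K),
          Tendsto (fun i => ContinuousLinearMap.adjoint (πs i a) x) l
            (nhds (ContinuousLinearMap.adjoint (π a) x))))
    (L : Submodule ℂ K) [CompleteSpace ↥L]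
    (hred : ∀ a : ↥A, ∀ x ∈ L, π a x ∈ L ∧ ContinuousLinearMap.adjoint (π a) x ∈ L)
    (hinf : ¬ FiniteDimensional ℂ ↥L) :
    ∃ (ι : Type) (l : Filter ι), l.NeBot ∧
      ∃ σs : ι → ↥A → (↥L →L[ℂ] ↥L),
        (∀ i, ∀ a b : ↥A, σs i (a * b) = σs i a * σs i b) ∧
        (∀ i, ∀ a b : ↥A, σs i (a + b) = σs i a + σs i b) ∧
        (∀ i, ∀ (c : ℂ) (a : ↥A), σs i (c • a) = c • σs i a) ∧
        (∀ i, ∀ a : ↥A, ‖σs i a‖ ≤ ‖(a : H₀ →L[ℂ] H₀)‖) ∧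
        (∀ i, ∃ Y : Submodule ℂ ↥L, FiniteDimensional ℂ Y ∧
          ∀ a : ↥A, LinearMap.range ((σs i a : ↥L →ₗ[ℂ] ↥L)) ≤ Y ∧
            LinearMap.range ((ContinuousLinearMap.adjoint (σs i a) : ↥L →ₗ[ℂ] ↥L)) ≤ Y) ∧
        (∀ (a : ↥A) (x : ↥L),
          Tendsto (fun i => ((σs i a x : ↥L) : K)) l (nhds (π a (x : K)))) ∧
        (∀ (a : ↥A) (x : ↥L),
          Tendsto (fun i => ((ContinuousLinearMap.adjoint (σs i a) x : ↥L) : K)) l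
            (nhds (ContinuousLinearMap.adjoint (π a) (x : K)))) := by
  classical
  obtain ⟨ι₀, l, hl, πs, hmul, hadd, hsmul, hcontr, hfd, hconv, hconv'⟩ := hEL
  haveI := hl
  choose Y hYfd hY using hfd
  set PK : K →L[ℂ] K := L.subtypeL.comp (Submodule.orthogonalProjectionOnto L) with hPKdef
  have hPKapp : ∀ v : K, PK v = ((Submodule.orthogonalProjectionOnto L v : ↥L) : K) := fun v => rfl
  have hPKmem : ∀ v : K, PK v ∈ L := fun v => (Submodule.orthogonalProjectionOnto L v).2
  have hPKfix : ∀ v ∈ L, PK v = v := by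
    intro v hv
    rw [hPKapp, ← Submodule.starProjection_apply, Submodule.starProjection_eq_self_iff]
    exact hv
  have hPKnorm : ∀ z : K, ‖PK z‖ ≤ ‖z‖ := by
    intro z
    calc ‖PK z‖ = ‖Submodule.orthogonalProjectionOnto L z‖ := rfl
      _ ≤ ‖Submodule.orthogonalProjectionOnto L‖ * ‖z‖ := (Submodule.orthogonalProjectionOnto L).le_opNorm _
      _ ≤ 1 * ‖z‖ := mul_le_mul_of_nonneg_right (Submodule.orthogonalProjectionOnto_norm_le L) (norm_nonneg _)
      _ = ‖z‖ := one_mul _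
  have hPKidem : ((PK : K →ₗ[ℂ] K).comp (PK : K →ₗ[ℂ] K)) = (PK : K →ₗ[ℂ] K) := by
    apply LinearMap.ext
    intro z
    simp only [LinearMap.comp_apply, ContinuousLinearMap.coe_coe]
    exact hPKfix _ (hPKmem z)
  set Ksup : Submodule ℂ K := ⨆ i, (Y i ⊔ Submodule.map (PK : K →ₗ[ℂ] K) (Y i)) with hKsupdef
  set K₁ : Submodule ℂ K := Ksup.topologicalClosure with hK₁def
  haveI : CompleteSpace ↥K₁ := (Submodule.isClosed_topologicalClosure Ksup).completeSpace_coe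
  have hmap : Submodule.map (PK : K →ₗ[ℂ] K) Ksup ≤ Ksup := by
    rw [hKsupdef, Submodule.map_iSup]
    apply iSup_le
    intro i
    rw [Submodule.map_sup]
    apply sup_le
    · exact le_iSup_of_le i le_sup_right
    · rw [← Submodule.map_comp, hPKidem]
      exact le_iSup_of_le i le_sup_right
  have hPKK₁ : ∀ z ∈ K₁, PK z ∈ K₁ := by
    intro z hz
    have hz' : z ∈ closure (Ksup : Set K) := by
      rw [hK₁def] at hz
      rwa [← SetLike.mem_coe, Submodule.topologicalClosure_coe] at hz
    have h1 : PK z ∈ PK '' closure (Ksup : Set K) := ⟨z, hz', rfl⟩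
    have h2 : PK '' closure (Ksup : Set K) ⊆ closure (PK '' (Ksup : Set K)) :=
      image_closure_subset_closure_image PK.continuous
    have h3 : closure (PK '' (Ksup : Set K)) ⊆ closure (Ksup : Set K) := by
      apply closure_mono
      rintro - ⟨z', hz', rfl⟩
      exact hmap ⟨z', hz', rfl⟩
    have h4 : PK z ∈ closure (Ksup : Set K) := h3 (h2 h1)
    rw [hK₁def, ← SetLike.mem_coe, Submodule.topologicalClosure_coe]
    exact h4
  have hYK₁ : ∀ i, Y i ≤ K₁ := fun i =>
    le_trans (le_iSup_of_le i le_sup_left) Ksup.le_topologicalClosure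
  have hπK₁ : ∀ (a : ↥A) (z : K), π a z ∈ K₁ := by
    intro a z
    have := (Submodule.isClosed_topologicalClosure Ksup).mem_of_tendsto (hconv a z)
      (by filter_upwards with i
          exact SetLike.mem_coe.mpr (hYK₁ i ((hY i a).1 ⟨z, rfl⟩)))
    exact SetLike.mem_coe.mp this
  have hπK₁' : ∀ (a : ↥A) (z : K), ContinuousLinearMap.adjoint (π a) z ∈ K₁ := by
    intro a z
    have := (Submodule.isClosed_topologicalClosure Ksup).mem_of_tendsto (hconv' a z)
      (by filter_upwards with i
          exact SetLike.mem_coe.mpr (hYK₁ i ((hY i a).2 ⟨z, rfl⟩)))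
    exact SetLike.mem_coe.mp this
  have hcoePL : ∀ z ∈ L, ((Submodule.orthogonalProjectionOnto L z : ↥L) : K) = z := fun z hz =>
    Submodule.starProjection_eq_self_iff.mpr hz
  have hPKorth : ∀ z ∈ K₁ᗮ, PK z ∈ K₁ᗮ := by
    intro z hz
    rw [Submodule.mem_orthogonal]
    intro k hk
    have h1 : (⟪k, PK z⟫ : ℂ) = ⟪PK k, z⟫ := by
      rw [hPKapp, hPKapp]
      exact (Submodule.inner_starProjection_left_eq_right L k z).symm
    rw [h1]
    exact (Submodule.mem_orthogonal K₁ z).mp hz _ (hPKK₁ k hk)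
  have hx₀L : ∀ x ∈ L, ((Submodule.orthogonalProjectionOnto K₁ x : ↥K₁) : K) ∈ L := by
    intro x hx
    set x₀ : K := ((Submodule.orthogonalProjectionOnto K₁ x : ↥K₁) : K) with hx₀def
    have d1 : x₀ - PK x₀ ∈ K₁ :=
      Submodule.sub_mem _ (Submodule.orthogonalProjectionOnto K₁ x).2 (hPKK₁ _ (Submodule.orthogonalProjectionOnto K₁ x).2)
    have dsub : x - x₀ ∈ K₁ᗮ := Submodule.sub_starProjection_mem_orthogonal x
    have d2 : x₀ - PK x₀ ∈ K₁ᗮ := by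
      have e : x₀ - PK x₀ = (x₀ - x) + PK (x - x₀) := by
        rw [map_sub, hPKfix x hx]
        abel
      rw [e]
      refine Submodule.add_mem _ ?_ (hPKorth _ dsub)
      have := Submodule.neg_mem _ dsub
      rwa [neg_sub] at this
    have d3 : x₀ - PK x₀ = 0 :=
      Submodule.disjoint_def.mp (Submodule.orthogonal_disjoint K₁) _ d1 d2
    have d4 : x₀ = PK x₀ := sub_eq_zero.mp d3
    rw [d4]
    exact hPKmem x₀
  by_cases hfin : FiniteDimensional ℂ ↥(L ⊓ K₁)
  · -- constant case: the restriction itself has finite-dimensional essential space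
    haveI := hfin
    set σc : ↥A → (↥L →L[ℂ] ↥L) := fun a =>
      (Submodule.orthogonalProjectionOnto L).comp ((π a).comp L.subtypeL) with hσcdef
    have happ : ∀ (a : ↥A) (x : ↥L), ((σc a x : ↥L) : K) = π a (x : K) := by
      intro a x
      show ((Submodule.orthogonalProjectionOnto L (π a (x : K)) : ↥L) : K) = π a (x : K)
      exact hcoePL _ (hred a _ x.2).1
    have hadjc : ∀ a : ↥A, ContinuousLinearMap.adjoint (σc a)
        = (Submodule.orthogonalProjectionOnto L).comp ((ContinuousLinearMap.adjoint (π a)).comp L.subtypeL) := by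
      intro a
      have h0 : σc a = (Submodule.orthogonalProjectionOnto L).comp ((π a).comp L.subtypeL) := rfl
      rw [h0, ContinuousLinearMap.adjoint_comp, ContinuousLinearMap.adjoint_comp,
        Submodule.adjoint_subtypeL, Submodule.adjoint_orthogonalProjection]
      ext x
      rfl
    have happ' : ∀ (a : ↥A) (x : ↥L), ((ContinuousLinearMap.adjoint (σc a) x : ↥L) : K)
        = ContinuousLinearMap.adjoint (π a) (x : K) := by
      intro a x
      rw [hadjc a]
      show ((Submodule.orthogonalProjectionOnto L (ContinuousLinearMap.adjoint (π a) (x : K)) : ↥L) : K) = _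
      exact hcoePL _ (hred a _ x.2).2
    refine ⟨ℕ, atTop, atTop_neBot, fun _ => σc, ?_, ?_, ?_, ?_, ?_, ?_, ?_⟩
    · intro _ a b
      ext x
      show ((σc (a * b) x : ↥L) : K) = ((σc a (σc b x) : ↥L) : K)
      rw [happ, happ, happ, hπmul]
      rfl
    · intro _ a b
      ext x
      show ((σc (a + b) x : ↥L) : K) = ((σc a x + σc b x : ↥L) : K)
      rw [Submodule.coe_add, happ, happ, happ, hπadd]
      rfl
    · intro _ c a
      ext x
      show ((σc (c • a) x : ↥L) : K) = ((c • σc a x : ↥L) : K)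
      rw [Submodule.coe_smul, happ, happ, hπsmul]
      rfl
    · intro _ a
      apply ContinuousLinearMap.opNorm_le_bound _ (norm_nonneg _)
      intro x
      have e0 : ‖σc a x‖ = ‖((σc a x : ↥L) : K)‖ := rfl
      rw [e0, happ]
      calc ‖π a (x : K)‖ ≤ ‖π a‖ * ‖(x : K)‖ := (π a).le_opNorm _
        _ ≤ ‖(a : H₀ →L[ℂ] H₀)‖ * ‖x‖ :=
            mul_le_mul (hπcontr a) le_rfl (norm_nonneg _) (norm_nonneg _)
    · intro _
      refine ⟨Submodule.comap L.subtype (L ⊓ K₁), ?_, ?_⟩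
      · exact (Submodule.comapSubtypeEquivOfLe (inf_le_left : L ⊓ K₁ ≤ L)).symm.finiteDimensional
      · intro a
        constructor
        · rintro z ⟨x, rfl⟩
          rw [Submodule.mem_comap]
          show ((σc a x : ↥L) : K) ∈ L ⊓ K₁
          rw [happ]
          exact ⟨(hred a _ x.2).1, hπK₁ a _⟩
        · rintro z ⟨x, rfl⟩
          rw [Submodule.mem_comap]
          show ((ContinuousLinearMap.adjoint (σc a) x : ↥L) : K) ∈ L ⊓ K₁
          rw [happ']
          exact ⟨(hred a _ x.2).2, hπK₁' a _⟩
    · intro a x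
      simp only [happ]
      exact tendsto_const_nhds
    · intro a x
      simp only [happ']
      exact tendsto_const_nhds
  · -- main case
    have hFG : ∀ i, (Y i).FG := fun i => (Submodule.fg_top (Y i)).mp (Module.finite_def.mp (hYfd i))
    choose s hs using hFG
    set v : ι₀ × ℕ → K := fun q => PK ((s q.1).toList.getD q.2 0) with hvdef
    have hspan : ∀ i, Submodule.map (PK : K →ₗ[ℂ] K) (Y i) ≤ Submodule.span ℂ (Set.range v) := by
      intro i
      rw [← hs i, Submodule.map_span]
      apply Submodule.span_le.mpr
      rintro - ⟨b, hb, rfl⟩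
      apply Submodule.subset_span
      obtain ⟨n, hn, hbn⟩ := List.mem_iff_getElem.mp (Finset.mem_toList.mpr hb)
      refine ⟨(i, n), ?_⟩
      show PK ((s i).toList.getD n 0) = (PK : K →ₗ[ℂ] K) b
      simp only [ContinuousLinearMap.coe_coe]
      rw [List.getD_eq_getElem _ _ hn, hbn]
    have hmapv : Submodule.map (PK : K →ₗ[ℂ] K) Ksup ≤ Submodule.span ℂ (Set.range v) := by
      rw [hKsupdef, Submodule.map_iSup]
      apply iSup_le
      intro i
      rw [Submodule.map_sup]
      apply sup_le (hspan i)
      rw [← Submodule.map_comp, hPKidem]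
      exact hspan i
    have happrox : ∀ x₀ : K, x₀ ∈ L → x₀ ∈ K₁ → ∀ ζ : ℝ, 0 < ζ →
        ∃ (F₀ : Finset (ι₀ × ℕ)) (w : K), w ∈ Submodule.span ℂ (v '' ↑F₀) ∧ ‖x₀ - w‖ < ζ := by
      intro x₀ hx₀ hK₁x ζ hζ
      have h1 : x₀ ∈ closure (Ksup : Set K) := by
        rw [hK₁def] at hK₁x
        rwa [← SetLike.mem_coe, Submodule.topologicalClosure_coe] at hK₁x
      obtain ⟨z, hz, hdz⟩ := Metric.mem_closure_iff.mp h1 ζ hζ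
      have hnorm : ‖x₀ - PK z‖ < ζ := by
        have e : x₀ - PK z = PK (x₀ - z) := by rw [map_sub, hPKfix x₀ hx₀]
        rw [e]
        calc ‖PK (x₀ - z)‖ ≤ ‖x₀ - z‖ := hPKnorm _
          _ < ζ := by rwa [← dist_eq_norm]
      have hmem : PK z ∈ Submodule.span ℂ (Set.range v) := by
        apply hmapv
        exact ⟨z, hz, rfl⟩
      obtain ⟨t, hts, htmem⟩ := Submodule.mem_span_finite_of_mem_span hmem
      have hch : ∀ b ∈ t, ∃ p : ι₀ × ℕ, v p = b := fun b hb => hts hb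
      choose φ hφ using hch
      refine ⟨t.attach.image (fun b => φ b.1 b.2), PK z, ?_, hnorm⟩
      have hsub : (↑t : Set K) ⊆ v '' ↑(t.attach.image (fun b => φ b.1 b.2)) := by
        intro b hb
        have hb' : b ∈ t := hb
        refine ⟨φ b hb', ?_, hφ b hb'⟩
        simp only [Finset.coe_image, Set.mem_image, Finset.mem_coe]
        exact ⟨⟨b, hb'⟩, Finset.mem_attach _ _, rfl⟩
      exact Submodule.span_mono hsub htmem
    have hex : ∀ j : ι₀ × Finset (ι₀ × ℕ),
        ∃ σ : ↥A → (↥L →L[ℂ] ↥L),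
          (∀ a b : ↥A, σ (a * b) = σ a * σ b) ∧
          (∀ a b : ↥A, σ (a + b) = σ a + σ b) ∧
          (∀ (c : ℂ) (a : ↥A), σ (c • a) = c • σ a) ∧
          (∀ a : ↥A, ‖σ a‖ ≤ ‖(a : H₀ →L[ℂ] H₀)‖) ∧
          (∃ Z : Submodule ℂ ↥L, FiniteDimensional ℂ Z ∧ ∀ a : ↥A,
            LinearMap.range ((σ a : ↥L →ₗ[ℂ] ↥L)) ≤ Z ∧
            LinearMap.range ((ContinuousLinearMap.adjoint (σ a) : ↥L →ₗ[ℂ] ↥L)) ≤ Z) ∧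
          (∀ (a : ↥A) (x : ↥L), ∀ y ∈ Submodule.span ℂ (v '' ↑j.2),
            ‖((σ a x : ↥L) : K) - π a (x : K)‖
              ≤ 2 * ‖(a : H₀ →L[ℂ] H₀)‖
                  * ‖((Submodule.orthogonalProjectionOnto K₁ (x : K) : ↥K₁) : K) - y‖
                + 3 * ‖πs j.1 a (x : K) - π a (x : K)‖ ∧
            ‖((ContinuousLinearMap.adjoint (σ a) x : ↥L) : K)
                - ContinuousLinearMap.adjoint (π a) (x : K)‖
              ≤ 2 * ‖(a : H₀ →L[ℂ] H₀)‖
                  * ‖((Submodule.orthogonalProjectionOnto K₁ (x : K) : ↥K₁) : K) - y‖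
                + 3 * ‖ContinuousLinearMap.adjoint (πs j.1 a) (x : K)
                    - ContinuousLinearMap.adjoint (π a) (x : K)‖) := by
      intro j
      exact per_index A π L hred K₁ hfin (πs j.1) (hmul j.1) (hadd j.1) (hsmul j.1)
        (hcontr j.1) (Y j.1) (hYfd j.1) (hY j.1) (Submodule.span ℂ (v '' ↑j.2))
        (FiniteDimensional.span_of_finite ℂ (j.2.finite_toSet.image v))
    choose σs h1 h2 h3 h4 h5 h6 using hex
    haveI : (l ×ˢ (atTop : Filter (Finset (ι₀ × ℕ)))).NeBot :=
      Filter.prod_neBot.mpr ⟨hl, atTop_neBot⟩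
    refine ⟨ι₀ × Finset (ι₀ × ℕ), l ×ˢ atTop, inferInstance, σs, h1, h2, h3, h4, h5, ?_, ?_⟩
    · intro a x
      apply aux_tendsto l (fun j => ((σs j a x : ↥L) : K)) (fun i => πs i a (x : K))
        (π a (x : K)) ‖(a : H₀ →L[ℂ] H₀)‖ (norm_nonneg _) v
        ((Submodule.orthogonalProjectionOnto K₁ (x : K) : ↥K₁) : K) ?_ (hconv a (x : K)) ?_
      · intro ζ hζ
        exact happrox _ (hx₀L _ x.2) (Submodule.orthogonalProjectionOnto K₁ (x : K)).2 ζ hζ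
      · intro j y hy
        exact (h6 j a x y hy).1
    · intro a x
      apply aux_tendsto l (fun j => ((ContinuousLinearMap.adjoint (σs j a) x : ↥L) : K))
        (fun i => ContinuousLinearMap.adjoint (πs i a) (x : K))
        (ContinuousLinearMap.adjoint (π a) (x : K)) ‖(a : H₀ →L[ℂ] H₀)‖ (norm_nonneg _) v
        ((Submodule.orthogonalProjectionOnto K₁ (x : K) : ↥K₁) : K) ?_ (hconv' a (x : K)) ?_
      · intro ζ hζ
        exact happrox _ (hx₀L _ x.2) (Submodule.orthogonalProjectionOnto K₁ (x : K)).2 ζ hζ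
      · intro j y hy
        exact (h6 j a x y hy).2
end
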